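/- arXiv:2412.21120 — 3 statements merged into one kernel-verified Lean document; each statement's English description precedes it below -/
import Mathlib

section
/- For any l ≥ 2 and indices 1 ≤ i_1 < ⋯ < i_l ≤ q, the pivot complex T_{i_1,…,i_l} is a resolution of Q/I if and only if the set {i_1,…,i_l} has a gap, i.e., there exists h ∈ [q] ∖ {i_1,…,i_l} such that m_h divides m_{{i_1,…,i_l}}. -/
open MvPolynomial Finset

noncomputable section

/-- `fsign A B` is `0` if `A ∩ B ≠ ∅`, and otherwise `(−1)^{p(A,B)}` where `p(A,B)`
is the number of pairs `(a,b) ∈ A × B` with `a > b`. -/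
def fsign {α : Type*} [LinearOrder α] [DecidableEq α] (A B : Finset α) : ℤ :=
  if A ∩ B = ∅ then (-1 : ℤ) ^ (((A ×ˢ B).filter fun p => p.2 < p.1).card) else 0

/-- The total module underlying the Taylor complex: free over `Q = k[x_1,…,x_n]`
with basis `ε_τ` indexed by all subsets `τ ⊆ [q]`. -/
abbrev TotMod (k : Type*) [Field k] (n q : ℕ) : Type _ :=
  Finset (Fin q) →₀ MvPolynomial (Fin n) k

/-- `m_τ = lcm{m_i : i ∈ τ}`, where `m_i` is the monomial with exponent vector `D i`. -/
def lcmMono (k : Type*) [Field k] (n q : ℕ) (D : Fin q → (Fin n →₀ ℕ))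
    (τ : Finset (Fin q)) : MvPolynomial (Fin n) k :=
  monomial (τ.sup D) (1 : k)

/-- The monomial ideal `I = (m_1, …, m_q)`. -/
def monIdeal (k : Type*) [Field k] (n q : ℕ) (D : Fin q → (Fin n →₀ ℕ)) :
    Ideal (MvPolynomial (Fin n) k) :=
  Ideal.span (Set.range fun i => monomial (D i) (1 : k))

/-- The Taylor differential `∂(ε_τ) = Σ_{j∈τ} sign(j, τ∖{j}) (m_τ/m_{τ∖{j}}) ε_{τ∖{j}}`,
as a linear endomorphism of the total module. -/
def taylorD (k : Type*) [Field k] (n q : ℕ) (D : Fin q → (Fin n →₀ ℕ)) :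
    TotMod k n q →ₗ[MvPolynomial (Fin n) k] TotMod k n q :=
  Finsupp.linearCombination _ fun τ =>
    ∑ j ∈ τ, Finsupp.single (τ \ {j})
      ((fsign {j} (τ \ {j}) : MvPolynomial (Fin n) k) *
        monomial (τ.sup D - (τ \ {j}).sup D) (1 : k))

/-- The degree-`i` piece of the subcomplex of the Taylor complex spanned by the
`ε_τ` with `τ ∈ Ω`: the free submodule with basis `{ε_τ : τ ∈ Ω, |τ| = i}`. -/
def piece (k : Type*) [Field k] (n q : ℕ) (Ω : Set (Finset (Fin q))) (i : ℕ) :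
    Submodule (MvPolynomial (Fin n) k) (TotMod k n q) :=
  Finsupp.supported _ _ {τ | τ ∈ Ω ∧ τ.card = i}

/-- The subcomplex of the Taylor complex spanned by all `ε_τ` with `τ ∈ Ω`. -/
def subcx (k : Type*) [Field k] (n q : ℕ) (Ω : Set (Finset (Fin q))) :
    Submodule (MvPolynomial (Fin n) k) (TotMod k n q) :=
  Finsupp.supported _ _ Ω

/-- The index family of the pivot complex `T_S`: all `τ` with `τ ⊉ S`. -/
def pivotΩ {q : ℕ} (S : Finset (Fin q)) : Set (Finset (Fin q)) := {τ | ¬ S ⊆ τ}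

/-- The subcomplex of the Taylor complex spanned by `{ε_τ : τ ∈ Ω}` is a resolution
of `Q/I`: it is exact in homological degrees `≥ 1`, and its zeroth homology is
identified with `Q/I` via the augmentation `ε_∅ ↦ 1`. -/
def IsResolutionOf (k : Type*) [Field k] (n q : ℕ) (D : Fin q → (Fin n →₀ ℕ))
    (Ω : Set (Finset (Fin q))) : Prop :=
  (∀ i : ℕ, ∀ x ∈ piece k n q Ω (i + 1), taylorD k n q D x = 0 →
      ∃ y ∈ piece k n q Ω (i + 2), taylorD k n q D y = x) ∧
  (∀ x ∈ piece k n q Ω 0,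
      (x (∅ : Finset (Fin q)) ∈ monIdeal k n q D ↔
        ∃ y ∈ piece k n q Ω 1, taylorD k n q D y = x))

/-- The Scarf set of `I`: all `t` such that there are two distinct subsets
`τ ≠ τ'` of `[q]` with `|τ| = t` and `m_τ = m_{τ'}`.  The Scarf number of `I`
is `sInf` of this set; `scarf(I) = ∞` corresponds to this set being empty. -/
def scarfSet (k : Type*) [Field k] (n q : ℕ) (D : Fin q → (Fin n →₀ ℕ)) : Set ℕ :=
  {t | ∃ τ τ' : Finset (Fin q), τ ≠ τ' ∧ τ.card = t ∧
        lcmMono k n q D τ = lcmMono k n q D τ'}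

end

noncomputable section

noncomputable section
namespace PivotAux
section Signs
variable {α : Type*} [LinearOrder α] [DecidableEq α]

lemma fsign_singleton (j : α) (B : Finset α) :
    fsign {j} B = if j ∈ B then 0 else (-1 : ℤ) ^ ((B.filter (· < j)).card) := by
  classical
  unfold fsign
  have h1 : ({j} ∩ B = ∅) ↔ j ∉ B := by
    simp [Finset.eq_empty_iff_forall_notMem]
  have h2 : (({j} ×ˢ B).filter fun p => p.2 < p.1) = ({j} ×ˢ (B.filter (· < j))) := by
    ext ⟨a, b⟩
    simp only [Finset.mem_filter, Finset.mem_product, Finset.mem_singleton]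
    constructor
    · rintro ⟨⟨rfl, hb⟩, h⟩; exact ⟨rfl, hb, h⟩
    · rintro ⟨rfl, hb, h⟩; exact ⟨⟨rfl, hb⟩, h⟩
  rw [h2]
  by_cases hj : j ∈ B
  · rw [if_neg (by simpa [h1] using hj), if_pos hj]
  · rw [if_pos (h1.mpr hj), if_neg hj, Finset.singleton_product, Finset.card_map]

lemma fsign_zero_of_mem {j : α} {B : Finset α} (hj : j ∈ B) : fsign {j} B = 0 := by
  simp [fsign_singleton, hj]

lemma fsign_sq {j : α} {B : Finset α} (hj : j ∉ B) : fsign {j} B * fsign {j} B = 1 := by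
  rw [fsign_singleton, if_neg hj, ← pow_add]
  exact Even.neg_one_pow ⟨_, rfl⟩

lemma cnt_insert (x y : α) {B : Finset α} (hy : y ∉ B) :
    ((insert y B).filter (· < x)).card
      = (B.filter (· < x)).card + (if y < x then 1 else 0) := by
  classical
  rw [Finset.filter_insert]
  split
  · rw [Finset.card_insert_of_notMem (by simp [hy])]
  · omega

/-- sign identity for ∂∂ = 0 -/
lemma fsign_antisymm₁ {j v : α} {B : Finset α} (hjv : j ≠ v) (hj : j ∉ B) (hv : v ∉ B) :
    fsign {j} (insert v B) * fsign {v} B = -(fsign {v} (insert j B) * fsign {j} B) := by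
  classical
  rw [fsign_singleton j, fsign_singleton v, fsign_singleton v (insert j B), fsign_singleton j B]
  rw [if_neg (by simp [hj, hjv]), if_neg hv, if_neg (by simp [hv, hjv.symm]), if_neg hj]
  rw [cnt_insert j v hv, cnt_insert v j hj]
  rcases hjv.lt_or_gt with h | h
  · rw [if_neg (not_lt.2 h.le), if_pos h, add_zero, pow_add, pow_one]
    ring
  · rw [if_pos h, if_neg (not_lt.2 h.le), add_zero, pow_add, pow_one]
    ring

/-- sign identity for the cone homotopy -/
lemma fsign_antisymm₂ {j v : α} {B : Finset α} (hjv : j ≠ v) (hj : j ∉ B) (hv : v ∉ B) :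
    fsign {v} (insert j B) * fsign {j} (insert v B) = -(fsign {j} B * fsign {v} B) := by
  classical
  rw [fsign_singleton v, fsign_singleton j, fsign_singleton j B, fsign_singleton v B]
  rw [if_neg (by simp [hv, hjv.symm]), if_neg (by simp [hj, hjv]), if_neg hj, if_neg hv]
  rw [cnt_insert v j hj, cnt_insert j v hv]
  rcases hjv.lt_or_gt with h | h
  · rw [if_pos h, if_neg (not_lt.2 h.le), add_zero, pow_add, pow_one]
    ring
  · rw [if_neg (not_lt.2 h.le), if_pos h, add_zero, pow_add, pow_one]
    ring

lemma fsign_empty (j : α) : fsign {j} (∅ : Finset α) = 1 := by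
  simp [fsign_singleton]

end Signs
end PivotAux

namespace PivotAux
variable {k : Type*} [Field k] {n q : ℕ} (D : Fin q → (Fin n →₀ ℕ))

/-- monomial basis element of the total module -/
def E (τ : Finset (Fin q)) (e : Fin n →₀ ℕ) : TotMod k n q :=
  Finsupp.single τ (monomial e (1 : k))

lemma taylorD_E (τ : Finset (Fin q)) (e : Fin n →₀ ℕ) :
    taylorD k n q D (E τ e) =
      ∑ j ∈ τ, (fsign {j} (τ.erase j) : ℤ) •
        E (τ.erase j) ((e + τ.sup D) - (τ.erase j).sup D) := by
  classical
  rw [E, taylorD, Finsupp.linearCombination_single, Finset.smul_sum]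
  refine Finset.sum_congr rfl fun j hj => ?_
  rw [← Finset.erase_eq, Finsupp.smul_single, E, Finsupp.smul_single]
  congr 1
  have hle : (τ.erase j).sup D ≤ τ.sup D := Finset.sup_mono (Finset.erase_subset _ _)
  rw [smul_eq_mul, zsmul_eq_mul, ← mul_assoc, mul_comm (monomial e (1:k)) _, mul_assoc,
    MvPolynomial.monomial_mul, one_mul, ← add_tsub_assoc_of_le hle]

/-- the strand projection, as a `k`-linear map -/
def Pmap (a : Fin n →₀ ℕ) : TotMod k n q →ₗ[k] TotMod k n q :=
  Finsupp.lsum k fun τ => (basisMonomials (Fin n) k).constr k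
    fun e => if e + τ.sup D = a then E τ e else 0

lemma Pmap_E (a : Fin n →₀ ℕ) (τ : Finset (Fin q)) (e : Fin n →₀ ℕ) :
    Pmap D a (E τ e) = if e + τ.sup D = a then (E τ e : TotMod k n q) else 0 := by
  rw [Pmap, E, Finsupp.lsum_single]
  have : monomial e (1 : k) = basisMonomials (Fin n) k e := by
    rw [coe_basisMonomials]
  rw [this, Module.Basis.constr_basis]
  split
  · rw [E, this]
  · rfl

/-- the cone homotopy with apex `v` on the strand of multidegree `a` -/
def smap (v : Fin q) (a : Fin n →₀ ℕ) : TotMod k n q →ₗ[k] TotMod k n q :=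
  Finsupp.lsum k fun τ => (basisMonomials (Fin n) k).constr k
    fun e => if e + τ.sup D = a then
      (fsign {v} τ : ℤ) • E (insert v τ) (a - (insert v τ).sup D) else 0

lemma smap_E (v : Fin q) (a : Fin n →₀ ℕ) (τ : Finset (Fin q)) (e : Fin n →₀ ℕ) :
    smap D v a (E τ e) = if e + τ.sup D = a then
      (fsign {v} τ : ℤ) • (E (insert v τ) (a - (insert v τ).sup D) : TotMod k n q) else 0 := by
  rw [smap, E, Finsupp.lsum_single]
  have : monomial e (1 : k) = basisMonomials (Fin n) k e := by
    rw [coe_basisMonomials]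
  rw [this, Module.Basis.constr_basis]

/-- expansion of an arbitrary element in the monomial basis -/
lemma repr (x : TotMod k n q) :
    x = ∑ τ ∈ x.support, ∑ e ∈ (x τ).support, coeff e (x τ) • E τ e := by
  classical
  conv_lhs => rw [← Finsupp.sum_single x]
  rw [Finsupp.sum]
  refine Finset.sum_congr rfl fun τ _ => ?_
  conv_lhs => rw [(x τ).as_sum]
  rw [Finsupp.single_finset_sum]
  refine Finset.sum_congr rfl fun e _ => ?_
  rw [E, Finsupp.smul_single, MvPolynomial.smul_monomial, smul_eq_mul, mul_one]

set_option maxHeartbeats 2000000 in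
lemma key (v : Fin q) (a : Fin n →₀ ℕ) (τ : Finset (Fin q)) (e : Fin n →₀ ℕ)
    (hva : e + τ.sup D = a → D v ≤ a) :
    taylorD k n q D (smap D v a (E τ e)) + smap D v a (taylorD k n q D (E τ e))
      = Pmap D a (E τ e) := by
  classical
  rw [Pmap_E, smap_E, taylorD_E, map_sum]
  by_cases hstr : e + τ.sup D = a
  · -- on strand
    have hv : D v ≤ a := hva hstr
    have hτa : τ.sup D ≤ a := hstr ▸ le_add_self
    have hea : a - τ.sup D = e := by rw [← hstr, add_tsub_cancel_right]
    have hcomp : ∀ j ∈ τ, smap D v a ((fsign {j} (τ.erase j) : ℤ) •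
        E (τ.erase j) ((e + τ.sup D) - (τ.erase j).sup D)) =
        (fsign {j} (τ.erase j) : ℤ) • (fsign {v} (τ.erase j) : ℤ) •
          (E (insert v (τ.erase j)) (a - (insert v (τ.erase j)).sup D) : TotMod k n q) := by
      intro j hj
      have hle : (τ.erase j).sup D ≤ e + τ.sup D :=
        le_trans (Finset.sup_mono (Finset.erase_subset _ _)) le_add_self
      rw [map_zsmul, smap_E, tsub_add_cancel_of_le hle, if_pos hstr]
    rw [if_pos hstr, if_pos hstr, Finset.sum_congr rfl hcomp]
    by_cases hvτ : v ∈ τ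
    · -- apex already in τ
      rw [fsign_zero_of_mem hvτ, zero_smul, map_zero, zero_add]
      rw [Finset.sum_eq_single v]
      · rw [Finset.insert_erase hvτ, smul_smul,
          fsign_sq (Finset.notMem_erase v τ), one_smul, hea]
      · intro j hj hjv
        rw [fsign_zero_of_mem (Finset.mem_erase.2 ⟨Ne.symm hjv, hvτ⟩), zero_smul, smul_zero]
      · exact fun h => absurd hvτ h
    · -- apex not in τ
      have hσa : (insert v τ).sup D ≤ a := by
        rw [Finset.sup_insert]
        exact sup_le hv hτa
      rw [map_zsmul, taylorD_E]
      have hexp : ∀ j, ((a - (insert v τ).sup D) + (insert v τ).sup D)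
          - ((insert v τ).erase j).sup D = a - ((insert v τ).erase j).sup D := by
        intro j
        rw [tsub_add_cancel_of_le hσa]
      rw [Finset.sum_congr rfl (fun j _ => by rw [hexp j])]
      rw [Finset.sum_insert hvτ, Finset.erase_insert hvτ, hea, smul_add, smul_smul,
        fsign_sq hvτ, one_smul]
      have hrw : ∀ j ∈ τ, (insert v τ).erase j = insert v (τ.erase j) := by
        intro j hj
        exact Finset.erase_insert_of_ne (fun h => hvτ (h ▸ hj))
      rw [Finset.sum_congr rfl (fun j hj => by rw [hrw j hj])]
      rw [add_assoc, Finset.smul_sum, ← Finset.sum_add_distrib]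
      conv_rhs => rw [← add_zero (E τ e)]
      congr 1
      refine Finset.sum_eq_zero fun j hj => ?_
      rw [smul_smul, smul_smul, ← add_smul]
      have hB1 : j ∉ τ.erase j := Finset.notMem_erase _ _
      have hB2 : v ∉ τ.erase j := fun h => hvτ (Finset.mem_of_mem_erase h)
      have hjv : j ≠ v := fun h => hvτ (h ▸ hj)
      have := fsign_antisymm₂ hjv hB1 hB2
      rw [Finset.insert_erase hj] at this
      rw [this]
      rw [neg_add_cancel, zero_smul]
  · -- off strand
    rw [if_neg hstr, if_neg hstr, map_zero, zero_add]
    refine Finset.sum_eq_zero fun j hj => ?_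
    have hle : (τ.erase j).sup D ≤ e + τ.sup D :=
      le_trans (Finset.sup_mono (Finset.erase_subset _ _)) le_add_self
    rw [map_zsmul, smap_E, tsub_add_cancel_of_le hle, if_neg hstr, smul_zero]


/-- finitely many multidegrees occur in `x` -/
def strands (x : TotMod k n q) : Finset (Fin n →₀ ℕ) :=
  x.support.biUnion fun τ => (x τ).support.image (· + τ.sup D)

lemma sum_P (x : TotMod k n q) : ∑ a ∈ strands D x, Pmap D a x = x := by
  classical
  have hP : ∀ a, Pmap D a x = ∑ τ ∈ x.support, ∑ e ∈ (x τ).support,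
      coeff e (x τ) • (if e + τ.sup D = a then (E τ e : TotMod k n q) else 0) := by
    intro a
    conv_lhs => rw [repr x]
    rw [map_sum]
    refine Finset.sum_congr rfl fun τ _ => ?_
    rw [map_sum]
    refine Finset.sum_congr rfl fun e _ => ?_
    rw [map_smul, Pmap_E]
  conv_rhs => rw [repr x]
  rw [Finset.sum_congr rfl fun a _ => hP a, Finset.sum_comm]
  refine Finset.sum_congr rfl fun τ hτ => ?_
  rw [Finset.sum_comm]
  refine Finset.sum_congr rfl fun e he => ?_
  rw [← Finset.smul_sum]
  congr 1
  rw [Finset.sum_ite_eq (strands D x) (e + τ.sup D) (fun _ => (E τ e : TotMod k n q))]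
  rw [if_pos]
  exact Finset.mem_biUnion.2 ⟨τ, hτ, Finset.mem_image.2 ⟨e, he, rfl⟩⟩

/-- apex of the cone in multidegree `a` -/
def vtx (S : Finset (Fin q)) (h0 : Fin q) (a : Fin n →₀ ℕ) : Fin q :=
  if S.sup D ≤ a then h0
  else if hV : ((Finset.univ : Finset (Fin q)).filter fun i => D i ≤ a).Nonempty then
    (Finset.univ.filter fun i => D i ≤ a).min' hV
  else h0

lemma D_vtx_le {S : Finset (Fin q)} {h0 : Fin q} {a : Fin n →₀ ℕ}
    (hgap : D h0 ≤ S.sup D) (hne : ∃ i, D i ≤ a) : D (vtx D S h0 a) ≤ a := by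
  unfold vtx
  split
  · exact le_trans hgap ‹_›
  · obtain ⟨i, hi⟩ := hne
    have hV : ((Finset.univ : Finset (Fin q)).filter fun i => D i ≤ a).Nonempty :=
      ⟨i, Finset.mem_filter.2 ⟨Finset.mem_univ _, hi⟩⟩
    rw [dif_pos hV]
    exact (Finset.mem_filter.1 (Finset.min'_mem _ hV)).2

lemma not_subset_insert_vtx {S : Finset (Fin q)} {h0 : Fin q} {a : Fin n →₀ ℕ}
    {τ : Finset (Fin q)} (hS2 : 2 ≤ S.card) (hh : h0 ∉ S) (hτ : ¬ S ⊆ τ)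
    (hstr : ∀ i ∈ τ, D i ≤ a) : ¬ S ⊆ insert (vtx D S h0 a) τ := by
  unfold vtx
  split
  · intro hsub
    exact hτ ((Finset.subset_insert_iff_of_notMem hh).1 hsub)
  · rename_i hSa
    split
    · rename_i hV
      intro hsub
      apply hSa
      refine Finset.sup_le fun i hi => ?_
      rcases Finset.mem_insert.1 (hsub hi) with h | h
      · rw [h]
        exact (Finset.mem_filter.1 (Finset.min'_mem _ hV)).2
      · exact hstr i h
    · rename_i hV
      intro hsub
      apply hV
      obtain ⟨i, hiS, j, hjS, hij⟩ := Finset.one_lt_card.1 hS2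
      rcases Finset.mem_insert.1 (hsub hiS) with hi | hi
      · rcases Finset.mem_insert.1 (hsub hjS) with hj | hj
        · exact absurd (hi.trans hj.symm) hij
        · exact ⟨j, Finset.mem_filter.2 ⟨Finset.mem_univ _, hstr j hj⟩⟩
      · exact ⟨i, Finset.mem_filter.2 ⟨Finset.mem_univ _, hstr i hi⟩⟩


lemma smap_E_mem {S : Finset (Fin q)} {h0 : Fin q} {a : Fin n →₀ ℕ}
    {τ : Finset (Fin q)} {e : Fin n →₀ ℕ} {c : ℕ}
    (hS2 : 2 ≤ S.card) (hh : h0 ∉ S) (hτΩ : τ ∈ pivotΩ S) (hcard : τ.card = c) :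
    smap D (vtx D S h0 a) a (E τ e) ∈ piece k n q (pivotΩ S) (c + 1) := by
  classical
  rw [smap_E]
  split
  · rename_i hstr
    set v := vtx D S h0 a with hv
    by_cases hvτ : v ∈ τ
    · rw [fsign_zero_of_mem hvτ, zero_smul]
      exact zero_mem _
    · have hDle : ∀ i ∈ τ, D i ≤ a := fun i hi =>
        le_trans (Finset.le_sup hi) (le_trans le_add_self (le_of_eq hstr))
      have hmem : insert v τ ∈ {σ | σ ∈ pivotΩ S ∧ σ.card = c + 1} := by
        refine ⟨not_subset_insert_vtx D hS2 hh hτΩ hDle, ?_⟩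
        rw [Finset.card_insert_of_notMem hvτ, hcard]
      have hs := Finsupp.single_mem_supported (s := {σ | σ ∈ pivotΩ S ∧ σ.card = c + 1})
        (MvPolynomial (Fin n) k) (monomial (a - (insert v τ).sup D) (1 : k)) hmem
      rw [← Int.cast_smul_eq_zsmul (MvPolynomial (Fin n) k)]
      exact Submodule.smul_mem _ _ hs
  · exact zero_mem _

lemma key_sum {x : TotMod k n q} (v : Fin q) (a : Fin n →₀ ℕ)
    (hva : ∀ τ ∈ x.support, ∀ e ∈ (x τ).support, e + τ.sup D = a → D v ≤ a) :
    taylorD k n q D (smap D v a x) + smap D v a (taylorD k n q D x) = Pmap D a x := by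
  classical
  let T := (taylorD k n q D).restrictScalars k
  let F : TotMod k n q →ₗ[k] TotMod k n q := T ∘ₗ smap D v a + smap D v a ∘ₗ T
  have hFx : F x = taylorD k n q D (smap D v a x) + smap D v a (taylorD k n q D x) := rfl
  rw [← hFx]
  have : x ∈ LinearMap.eqLocus F (Pmap D a) := by
    rw [show x = ∑ τ ∈ x.support, ∑ e ∈ (x τ).support, coeff e (x τ) • E τ e from repr x]
    refine Submodule.sum_mem _ fun τ hτ => Submodule.sum_mem _ fun e he => ?_
    refine Submodule.smul_mem _ _ ?_
    rw [LinearMap.mem_eqLocus]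
    show taylorD k n q D (smap D v a (E τ e)) + smap D v a (taylorD k n q D (E τ e))
      = Pmap D a (E τ e)
    exact key D v a τ e (hva τ hτ e he)
  exact this


set_option maxHeartbeats 1000000 in
lemma taylorD_taylorD_E (τ : Finset (Fin q)) (e : Fin n →₀ ℕ) :
    taylorD k n q D (taylorD k n q D (E τ e)) = 0 := by
  classical
  rw [taylorD_E, map_sum]
  have step : ∀ j ∈ τ, taylorD k n q D ((fsign {j} (τ.erase j) : ℤ) •
        E (τ.erase j) ((e + τ.sup D) - (τ.erase j).sup D))
      = ∑ j' ∈ τ.erase j, ((fsign {j} (τ.erase j) * fsign {j'} ((τ.erase j).erase j') : ℤ) •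
          (E ((τ.erase j).erase j') ((e + τ.sup D) - ((τ.erase j).erase j').sup D)
            : TotMod k n q)) := by
    intro j hj
    have hle : (τ.erase j).sup D ≤ e + τ.sup D :=
      le_trans (Finset.sup_mono (Finset.erase_subset _ _)) le_add_self
    rw [map_zsmul, taylorD_E, Finset.smul_sum]
    refine Finset.sum_congr rfl fun j' hj' => ?_
    rw [smul_smul, tsub_add_cancel_of_le hle]
  rw [Finset.sum_congr rfl step, Finset.sum_sigma']
  refine Finset.sum_involution (fun p _ => ⟨p.2, p.1⟩) ?_ ?_ ?_ ?_
  · rintro ⟨j, j'⟩ hp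
    rw [Finset.mem_sigma] at hp
    obtain ⟨hj, hj'⟩ := hp
    have hj'τ : j' ∈ τ := Finset.mem_of_mem_erase hj'
    have hne : j' ≠ j := (Finset.mem_erase.1 hj').1
    have hjmem : j ∈ τ.erase j' := Finset.mem_erase.2 ⟨hne.symm, hj⟩
    have hset : (τ.erase j').erase j = (τ.erase j).erase j' := Finset.erase_right_comm
    dsimp only
    rw [hset, ← add_smul]
    set B := (τ.erase j).erase j' with hB
    have hjB : j ∉ B := fun h => Finset.notMem_erase j τ (Finset.mem_of_mem_erase h)
    have hj'B : j' ∉ B := Finset.notMem_erase _ _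
    have h1 : τ.erase j = insert j' B := (Finset.insert_erase hj').symm
    have h2 : τ.erase j' = insert j B := by
      rw [← hset]
      exact (Finset.insert_erase hjmem).symm
    rw [h1, h2, fsign_antisymm₁ (Ne.symm hne) hjB hj'B, neg_add_cancel, zero_smul]
  · rintro ⟨j, j'⟩ hp _
    rw [Finset.mem_sigma] at hp
    intro h
    have := congrArg Sigma.fst h
    exact (Finset.mem_erase.1 hp.2).1 this
  · rintro ⟨j, j'⟩ hp
    rw [Finset.mem_sigma] at hp ⊢
    exact ⟨Finset.mem_of_mem_erase hp.2,
      Finset.mem_erase.2 ⟨(Finset.mem_erase.1 hp.2).1.symm, hp.1⟩⟩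
  · rintro ⟨j, j'⟩ _
    rfl


lemma smap_mem {S : Finset (Fin q)} {h0 : Fin q} {a : Fin n →₀ ℕ} {c : ℕ}
    {x : TotMod k n q} (hS2 : 2 ≤ S.card) (hh : h0 ∉ S)
    (hx : x ∈ piece k n q (pivotΩ S) c) :
    smap D (vtx D S h0 a) a x ∈ piece k n q (pivotΩ S) (c + 1) := by
  classical
  have hsupp := (Finsupp.mem_supported _ x).1 hx
  rw [show x = ∑ τ ∈ x.support, ∑ e ∈ (x τ).support, coeff e (x τ) • E τ e from repr x]
  rw [map_sum]
  refine Submodule.sum_mem _ fun τ hτ => ?_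
  rw [map_sum]
  refine Submodule.sum_mem _ fun e he => ?_
  rw [map_smul, ← algebraMap_smul (MvPolynomial (Fin n) k) (coeff e (x τ))]
  refine Submodule.smul_mem _ _ ?_
  have hτset := hsupp hτ
  exact smap_E_mem D hS2 hh hτset.1 hτset.2

lemma exact_pos {S : Finset (Fin q)} {h0 : Fin q} (hS2 : 2 ≤ S.card) (hh : h0 ∉ S)
    (hgap : D h0 ≤ S.sup D) (i : ℕ) (x : TotMod k n q)
    (hx : x ∈ piece k n q (pivotΩ S) (i + 1)) (hdx : taylorD k n q D x = 0) :
    ∃ y ∈ piece k n q (pivotΩ S) (i + 2), taylorD k n q D y = x := by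
  classical
  have hsupp := (Finsupp.mem_supported _ x).1 hx
  refine ⟨∑ a ∈ strands D x, smap D (vtx D S h0 a) a x, ?_, ?_⟩
  · exact Submodule.sum_mem _ fun a _ => smap_mem D hS2 hh hx
  · rw [map_sum]
    have hterm : ∀ a ∈ strands D x,
        taylorD k n q D (smap D (vtx D S h0 a) a x) = Pmap D a x := by
      intro a _
      have hva : ∀ τ ∈ x.support, ∀ e ∈ (x τ).support,
          e + τ.sup D = a → D (vtx D S h0 a) ≤ a := by
        intro τ hτ e _ hstr
        have hτc := (hsupp hτ).2
        have hτne : τ.Nonempty := Finset.card_pos.1 (by omega)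
        obtain ⟨j, hj⟩ := hτne
        have : D j ≤ a := le_trans (Finset.le_sup hj) (le_trans le_add_self (le_of_eq hstr))
        exact D_vtx_le D hgap ⟨j, this⟩
      have hkey := key_sum D (vtx D S h0 a) a hva
      rw [hdx, map_zero, add_zero] at hkey
      exact hkey
    rw [Finset.sum_congr rfl hterm, sum_P]


lemma piece_zero_eq {Ω : Set (Finset (Fin q))} {x : TotMod k n q}
    (hx : x ∈ piece k n q Ω 0) : x = Finsupp.single ∅ (x ∅) := by
  classical
  have hsupp := (Finsupp.mem_supported _ x).1 hx
  apply Finsupp.ext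
  intro τ
  by_cases hτ : τ = (∅ : Finset (Fin q))
  · rw [hτ, Finsupp.single_eq_same]
  · rw [Finsupp.single_eq_of_ne' (Ne.symm hτ)]
    by_contra hne
    have : τ ∈ x.support := Finsupp.mem_support_iff.2 hne
    have := (hsupp this).2
    exact hτ (Finset.card_eq_zero.1 this)

lemma taylorD_single_singleton (j : Fin q) (f : MvPolynomial (Fin n) k) :
    taylorD k n q D (Finsupp.single {j} f)
      = Finsupp.single ∅ (f * monomial (D j) (1 : k)) := by
  classical
  rw [taylorD, Finsupp.linearCombination_single, Finset.sum_singleton, Finset.sdiff_self,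
    Finsupp.smul_single, smul_eq_mul]
  congr 1
  rw [Finset.sup_singleton, Finset.sup_empty, fsign_empty, Int.cast_one, one_mul,
    show (⊥ : Fin n →₀ ℕ) = 0 from rfl, tsub_zero]

lemma cond2 {S : Finset (Fin q)} (hS2 : 2 ≤ S.card) :
    ∀ x ∈ piece k n q (pivotΩ S) 0,
      (x (∅ : Finset (Fin q)) ∈ monIdeal k n q D ↔
        ∃ y ∈ piece k n q (pivotΩ S) 1, taylorD k n q D y = x) := by
  classical
  intro x hx
  have hsingleton : ∀ j : Fin q, ({j} : Finset (Fin q)) ∈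
      {τ | τ ∈ pivotΩ S ∧ τ.card = 1} := by
    intro j
    refine ⟨fun hsub => ?_, Finset.card_singleton j⟩
    have := Finset.card_le_card hsub
    rw [Finset.card_singleton] at this
    omega
  constructor
  · intro hmem
    rw [monIdeal, Ideal.mem_span_range_iff_exists_fun] at hmem
    obtain ⟨c, hc⟩ := hmem
    refine ⟨∑ j : Fin q, Finsupp.single {j} (c j), ?_, ?_⟩
    · exact Submodule.sum_mem _ fun j _ =>
        Finsupp.single_mem_supported _ _ (hsingleton j)
    · rw [map_sum]
      have : ∀ j ∈ (Finset.univ : Finset (Fin q)),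
          taylorD k n q D (Finsupp.single ({j} : Finset (Fin q)) (c j))
            = Finsupp.single (∅ : Finset (Fin q)) (c j * monomial (D j) (1:k)) :=
        fun j _ => taylorD_single_singleton D j (c j)
      rw [Finset.sum_congr rfl this, ← Finsupp.single_finset_sum, hc]
      exact (piece_zero_eq hx).symm
  · rintro ⟨y, hy, rfl⟩
    have hsupp := (Finsupp.mem_supported _ y).1 hy
    rw [show y = ∑ τ ∈ y.support, Finsupp.single τ (y τ) from
      (Finsupp.sum_single y).symm]
    rw [map_sum, Finsupp.finset_sum_apply]
    refine Submodule.sum_mem _ fun τ hτ => ?_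
    obtain ⟨j, hj⟩ := Finset.card_eq_one.1 (hsupp hτ).2
    rw [hj, taylorD_single_singleton, Finsupp.single_eq_same]
    exact Ideal.mul_mem_left _ _ (Ideal.subset_span ⟨j, rfl⟩)


lemma lcm_dvd_iff {S : Finset (Fin q)} {h0 : Fin q} :
    lcmMono k n q D {h0} ∣ lcmMono k n q D S ↔ D h0 ≤ S.sup D := by
  rw [lcmMono, lcmMono, Finset.sup_singleton, MvPolynomial.monomial_dvd_monomial]
  simp

set_option maxHeartbeats 2000000 in
lemma not_res {S : Finset (Fin q)} (hS2 : 2 ≤ S.card)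
    (hnogap : ∀ h0 : Fin q, h0 ∉ S → ¬ D h0 ≤ S.sup D)
    (hres : IsResolutionOf k n q D (pivotΩ S)) : False := by
  classical
  obtain ⟨j0, hj0⟩ : S.Nonempty := Finset.card_pos.1 (by omega)
  set B := S.erase j0 with hB
  have hj0B : j0 ∉ B := Finset.notMem_erase _ _
  set x := taylorD k n q D (E S 0) with hx
  have hxmem : x ∈ piece k n q (pivotΩ S) (S.card - 2 + 1) := by
    rw [hx, taylorD_E]
    refine Submodule.sum_mem _ fun j hj => ?_
    rw [← Int.cast_smul_eq_zsmul (MvPolynomial (Fin n) k)]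
    refine Submodule.smul_mem _ _ (Finsupp.single_mem_supported _ _ ?_)
    refine ⟨fun hsub => Finset.notMem_erase j S (hsub hj), ?_⟩
    rw [Finset.card_erase_of_mem hj]
    omega
  have hdx : taylorD k n q D x = 0 := taylorD_taylorD_E D S 0
  obtain ⟨y, hy, hdy⟩ := hres.1 (S.card - 2) x hxmem hdx
  set m : Fin n →₀ ℕ := S.sup D - B.sup D with hm
  -- the coefficient of `x` at `B` in multidegree `m` is `±1`
  have hxB : coeff m (x B) ≠ 0 := by
    have h1 : x B = (fsign {j0} B : MvPolynomial (Fin n) k)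
        * monomial ((0 + S.sup D) - B.sup D) (1:k) := by
      rw [hx, taylorD_E, Finsupp.finset_sum_apply]
      rw [Finset.sum_eq_single j0]
      · rw [← Int.cast_smul_eq_zsmul (MvPolynomial (Fin n) k), Finsupp.smul_apply, E,
          Finsupp.single_apply, if_pos hB.symm, smul_eq_mul, hB]
      · intro j hj hne
        rw [← Int.cast_smul_eq_zsmul (MvPolynomial (Fin n) k), Finsupp.smul_apply, E,
          Finsupp.single_apply, if_neg, smul_zero]
        intro heq
        have hjB : j ∈ B := Finset.mem_erase.2 ⟨hne, hj⟩
        rw [← heq] at hjB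
        exact Finset.notMem_erase j S hjB
      · intro h
        exact absurd hj0 h
    rw [h1, zero_add, ← hm, ← map_intCast (C : k →+* MvPolynomial (Fin n) k),
      coeff_C_mul, coeff_monomial, if_pos rfl, mul_one]
    rw [fsign_singleton, if_neg hj0B]
    push_cast
    exact pow_ne_zero _ (neg_ne_zero.2 one_ne_zero)
  -- the coefficient of `∂y` at `B` in multidegree `m` is `0`
  have hyB : coeff m ((taylorD k n q D y) B) = 0 := by
    have hycard : ∀ τ ∈ y.support, (¬ S ⊆ τ) ∧ τ.card = S.card := by
      intro τ hτ
      have h := ((Finsupp.mem_supported _ y).1 hy) hτ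
      exact ⟨h.1, by have := h.2; omega⟩
    rw [show y = ∑ τ ∈ y.support, Finsupp.single τ (y τ) from (Finsupp.sum_single y).symm,
      map_sum, Finsupp.finset_sum_apply, ← lcoeff_apply, map_sum]
    refine Finset.sum_eq_zero fun τ hτ => ?_
    obtain ⟨hτΩ, hτcard⟩ := hycard τ hτ
    rw [taylorD, Finsupp.linearCombination_single, Finsupp.smul_apply,
      Finsupp.finset_sum_apply, smul_eq_mul, Finset.mul_sum, lcoeff_apply, ← lcoeff_apply,
      map_sum]
    refine Finset.sum_eq_zero fun j hj => ?_
    simp only [← Finset.erase_eq]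
    rw [Finsupp.single_apply, lcoeff_apply]
    by_cases heq : τ.erase j = B
    · rw [if_pos heq, heq, mul_left_comm, ← map_intCast (C : k →+* MvPolynomial (Fin n) k),
        coeff_C_mul, coeff_mul_monomial', if_neg, mul_zero]
      -- no gap: the exponent does not divide
      intro hd
      have hjB : j ∉ B := by
        rw [← heq]
        exact Finset.notMem_erase _ _
      have hjS : j ∉ S := by
        intro hjS
        rcases eq_or_ne j j0 with rfl | hne
        · have hτS : τ = S := by
            rw [← Finset.insert_erase hj, heq, hB, Finset.insert_erase hj0]
          exact hτΩ (hτS ▸ Finset.Subset.refl S)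
        · exact hjB (Finset.mem_erase.2 ⟨hne, hjS⟩)
      have hBτ : B.sup D ≤ τ.sup D := by
        rw [← heq]
        exact Finset.sup_mono (Finset.erase_subset _ _)
      have hBS : B.sup D ≤ S.sup D := Finset.sup_mono (Finset.erase_subset _ _)
      have hτS : τ.sup D ≤ S.sup D := by
        calc τ.sup D = (τ.sup D - B.sup D) + B.sup D := (tsub_add_cancel_of_le hBτ).symm
          _ ≤ (S.sup D - B.sup D) + B.sup D := add_le_add_left (hm ▸ hd) _
          _ = S.sup D := tsub_add_cancel_of_le hBS
      exact hnogap j hjS (le_trans (Finset.le_sup hj) hτS)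
    · rw [if_neg heq, mul_zero, coeff_zero]
  rw [hdy] at hyB
  exact hxB hyB

end PivotAux
end


/-- **Pivot complexes that are resolutions.**
Let `I = (m_1,…,m_q)` be minimally generated by monomials (no `m_i` divides `m_j`
for `i ≠ j`, each `m_i` a non-unit) in `Q = k[x_1,…,x_n]`.  For a set `S` of at
least two indices, the pivot complex `T_S` is a resolution of `Q/I` if and only
if `S` has a gap, i.e. there is `h ∈ [q] ∖ S` with `m_h ∣ m_S`. -/
theorem pivot_isResolution_iff_gap {k : Type*} [Field k] {n q : ℕ}
    (D : Fin q → (Fin n →₀ ℕ))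
    (hne : ∀ i : Fin q, D i ≠ 0)
    (hmin : ∀ i j : Fin q, i ≠ j → ¬ lcmMono k n q D {i} ∣ lcmMono k n q D {j})
    (S : Finset (Fin q)) (hS : 2 ≤ S.card) :
    IsResolutionOf k n q D (pivotΩ S) ↔
      ∃ h : Fin q, h ∉ S ∧ lcmMono k n q D {h} ∣ lcmMono k n q D S := by
  constructor
  · intro hres
    by_contra hng
    push_neg at hng
    refine PivotAux.not_res D hS (fun h0 hh0 hle => ?_) hres
    exact hng h0 hh0 ((PivotAux.lcm_dvd_iff D).2 hle)
  · rintro ⟨h0, hh0, hdvd⟩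
    have hgap : D h0 ≤ S.sup D := (PivotAux.lcm_dvd_iff D).1 hdvd
    exact ⟨fun i x hx hdx => PivotAux.exact_pos D hS hh0 hgap i x hx hdx,
      PivotAux.cond2 D hS⟩
end
end

section
/- Suppose l := scarf(I) < ∞. Then there exist indices 1 ≤ i_1 < ⋯ < i_l ≤ q such that the set {i_1,…,i_l} has a gap, so that the pivot complex T_{i_1,…,i_l} is a resolution of Q/I; moreover, for every i the i-th free module of this pivot resolution has rank binom(q,i) − binom(q−l, i−l). -/
open MvPolynomial Finset

section Sign
variable {α : Type*} [LinearOrder α] [DecidableEq α]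


lemma fsign_singleton (v : α) (B : Finset α) (hv : v ∉ B) :
    fsign {v} B = (-1 : ℤ) ^ ((B.filter (· < v)).card) := by
  rw [fsign, if_pos (Finset.singleton_inter_of_notMem hv)]
  congr 1
  have : (({v} ×ˢ B).filter fun p => p.2 < p.1)
      = (B.filter (· < v)).map ⟨fun b => (v, b), fun a b h => by simpa using h⟩ := by
    ext ⟨x, y⟩
    simp only [mem_filter, mem_product, mem_singleton, mem_map, Function.Embedding.coeFn_mk]
    constructor
    · rintro ⟨⟨rfl, hy⟩, hlt⟩; exact ⟨y, ⟨hy, hlt⟩, rfl⟩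
    · rintro ⟨b, ⟨hb, hlt⟩, h⟩; cases h; exact ⟨⟨rfl, hb⟩, hlt⟩
  rw [this, Finset.card_map]

lemma fsign_mul_self (v : α) (B : Finset α) (hv : v ∉ B) :
    fsign {v} B * fsign {v} B = 1 := by
  rw [fsign_singleton v B hv, ← pow_add]
  exact Even.neg_one_pow ⟨_, rfl⟩

lemma filter_lt_insert_card (v j : α) (B : Finset α) (hj : j ∉ B) :
    ((insert j B).filter (· < v)).card
      = (B.filter (· < v)).card + (if j < v then 1 else 0) := by
  rw [Finset.filter_insert]
  split
  · rw [Finset.card_insert_of_notMem (fun hc => hj (Finset.mem_filter.mp hc).1)]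
  · rw [add_zero]

lemma fsign_anticomm (v j : α) (A : Finset α) (hv : v ∉ A) (hj : j ∉ A) (hvj : v ≠ j) :
    fsign {v} (insert j A) * fsign {j} (insert v A)
      = -(fsign {j} A * fsign {v} A) := by
  have hvi : v ∉ insert j A := by simp [hvj, hv]
  have hji : j ∉ insert v A := by simp [hvj.symm, hj]
  rw [fsign_singleton v _ hvi, fsign_singleton j _ hji, fsign_singleton j A hj,
    fsign_singleton v A hv, filter_lt_insert_card v j A hj, filter_lt_insert_card j v A hv,
    ← pow_add, ← pow_add]
  have h1 : (if j < v then 1 else 0) + (if v < j then 1 else 0) = 1 := by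
    rcases lt_or_gt_of_ne hvj with h | h
    · simp [h, not_lt_of_gt h]
    · simp [h, not_lt_of_gt h]
  have : (A.filter (· < v)).card + (if j < v then 1 else 0)
      + ((A.filter (· < j)).card + (if v < j then 1 else 0))
      = ((A.filter (· < j)).card + (A.filter (· < v)).card) + 1 := by omega
  rw [this, pow_succ]
  ring

end Sign

noncomputable section Aux
variable {k : Type*} [Field k] {n q : ℕ} (D : Fin q → (Fin n →₀ ℕ))

/-- vertices of multidegree `a` -/
def Va (a : Fin n →₀ ℕ) : Finset (Fin q) := univ.filter (fun i => D i ≤ a)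

variable (h : Fin q)

/-- cone vertex -/
def pick (a : Fin n →₀ ℕ) : Fin q :=
  if D h ≤ a then h else if hV : (Va D a).Nonempty then (Va D a).min' hV else h

lemma pick_mem {a : Fin n →₀ ℕ} (hV : (Va D a).Nonempty) : pick D h a ∈ Va D a := by
  by_cases hha : D h ≤ a
  · rw [pick, if_pos hha]; simpa [Va] using hha
  · rw [pick, if_neg hha, dif_pos hV]; exact (Va D a).min'_mem hV

lemma pick_le {a : Fin n →₀ ℕ} (hV : (Va D a).Nonempty) : D (pick D h a) ≤ a := by
  have := pick_mem D h hV; simpa [Va] using this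

lemma pick_keeps {S : Finset (Fin q)} (hgap : h ∉ S) (hdvd : D h ≤ S.sup D)
    {a : Fin n →₀ ℕ} {τ : Finset (Fin q)} (hτa : τ.sup D ≤ a) (hS : ¬ S ⊆ τ) :
    ¬ S ⊆ insert (pick D h a) τ := by
  intro hsub
  by_cases hpe : pick D h a = h
  · rw [hpe] at hsub
    exact hS ((Finset.subset_insert_iff_of_notMem hgap).mp hsub)
  · have hha : ¬ D h ≤ a := fun hha => hpe (by rw [pick, if_pos hha])
    have hV : (Va D a).Nonempty := by
      by_contra hV
      exact hpe (by rw [pick, if_neg hha, dif_neg hV])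
    have hpa : D (pick D h a) ≤ a := pick_le D h hV
    apply hha
    refine hdvd.trans (Finset.sup_le fun i hi => ?_)
    rcases Finset.mem_insert.mp (hsub hi) with hieq | hiτ
    · rw [hieq]; exact hpa
    · exact (Finset.le_sup hiτ).trans hτa

/-- the termwise contraction -/
def termH (τ : Finset (Fin q)) (b : Fin n →₀ ℕ) : TotMod k n q :=
  if (Va D (b + τ.sup D) : Finset (Fin q)).Nonempty then
    if pick D h (b + τ.sup D) ∈ τ then 0
    else Finsupp.single (insert (pick D h (b + τ.sup D)) τ)
      (monomial (b + τ.sup D - (insert (pick D h (b + τ.sup D)) τ).sup D)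
        (((fsign {pick D h (b + τ.sup D)} τ : ℤ) : k)))
  else 0

/-- the contraction as a `k`-linear map -/
def Hmap : TotMod k n q →ₗ[k] TotMod k n q :=
  Finsupp.lsum k fun τ => (MvPolynomial.basisMonomials (Fin n) k).constr k (fun b => termH D h τ b)

lemma Hmap_single_monomial (τ : Finset (Fin q)) (b : Fin n →₀ ℕ) (c : k) :
    Hmap D h (Finsupp.single τ (monomial b c)) = c • termH D h τ b := by
  rw [Hmap, Finsupp.lsum_single]
  have : (monomial b c : MvPolynomial (Fin n) k) = c • (MvPolynomial.basisMonomials (Fin n) k) b := by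
    rw [MvPolynomial.coe_basisMonomials]; simp [MvPolynomial.smul_monomial]
  rw [this, map_smul, Module.Basis.constr_basis]

lemma taylorD_single (τ : Finset (Fin q)) (p : MvPolynomial (Fin n) k) :
    taylorD k n q D (Finsupp.single τ p)
      = ∑ j ∈ τ, Finsupp.single (τ \ {j})
          (p * ((fsign {j} (τ \ {j}) : MvPolynomial (Fin n) k) *
            monomial (τ.sup D - (τ \ {j}).sup D) (1 : k))) := by
  rw [taylorD, Finsupp.linearCombination_single, Finset.smul_sum]
  refine Finset.sum_congr rfl fun j hj => ?_
  rw [Finsupp.smul_single, smul_eq_mul]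

lemma taylorD_single_monomial (τ : Finset (Fin q)) (b : Fin n →₀ ℕ) (c : k) :
    taylorD k n q D (Finsupp.single τ (monomial b c))
      = ∑ j ∈ τ, Finsupp.single (τ \ {j})
          (monomial (b + (τ.sup D - (τ \ {j}).sup D))
            (c * ((fsign {j} (τ \ {j}) : ℤ) : k))) := by
  rw [taylorD_single]
  refine Finset.sum_congr rfl fun j hj => ?_
  congr 1
  have hc : ((fsign {j} (τ \ {j}) : ℤ) : MvPolynomial (Fin n) k)
      = C (((fsign {j} (τ \ {j}) : ℤ) : k)) := by
    rw [map_intCast]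
  rw [hc, MvPolynomial.C_mul_monomial, mul_one, MvPolynomial.monomial_mul]
end Aux

section Homotopy
variable {k : Type*} [Field k] {n q : ℕ} (D : Fin q → (Fin n →₀ ℕ)) (h : Fin q)

lemma termH_eq_of {σ : Finset (Fin q)} {b' a : Fin n →₀ ℕ} (hdeg : b' + σ.sup D = a)
    (hV : (Va D a : Finset (Fin q)).Nonempty) (hv : pick D h a ∉ σ) :
    termH D h σ b' = Finsupp.single (insert (pick D h a) σ)
      (monomial (a - (insert (pick D h a) σ).sup D)
        (((fsign {pick D h a} σ : ℤ) : k))) := by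
  rw [termH, hdeg, if_pos hV, if_neg hv]

lemma termH_zero_of {σ : Finset (Fin q)} {b' a : Fin n →₀ ℕ} (hdeg : b' + σ.sup D = a)
    (hv : pick D h a ∈ σ) : (termH D h σ b' : TotMod k n q) = 0 := by
  rw [termH, hdeg]
  simp [hv]


lemma homotopy_term (τ : Finset (Fin q)) (b : Fin n →₀ ℕ) (c : k)
    (hV : (Va D (b + τ.sup D) : Finset (Fin q)).Nonempty) :
    taylorD k n q D (Hmap D h (Finsupp.single τ (monomial b c)))
      + Hmap D h (taylorD k n q D (Finsupp.single τ (monomial b c)))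
    = Finsupp.single τ (monomial b c) := by
  set a := b + τ.sup D with ha
  set v := pick D h a with hv
  have hms : τ.sup D ≤ a := le_add_self
  have hva : D v ≤ a := pick_le D h hV
  have hdeg : ∀ j ∈ τ, (b + (τ.sup D - (τ \ {j}).sup D)) + (τ \ {j}).sup D = a := by
    intro j hj
    rw [add_assoc, tsub_add_cancel_of_le (Finset.sup_mono (Finset.sdiff_subset))]
  by_cases hvτ : v ∈ τ
  · -- v ∈ τ : first summand vanishes
    have h1 : Hmap D h (Finsupp.single τ (monomial b c)) = 0 := by
      rw [Hmap_single_monomial, termH_zero_of D h rfl hvτ, smul_zero]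
    rw [h1, map_zero, zero_add, taylorD_single_monomial, map_sum]
    have hins : insert v (τ \ {v}) = τ := by
      rw [← Finset.erase_eq]; exact Finset.insert_erase hvτ
    rw [Finset.sum_eq_single_of_mem v hvτ]
    · rw [Hmap_single_monomial, termH_eq_of D h (hdeg v hvτ) hV (by simp [hv]), ← hv, hins,
        Finsupp.smul_single, MvPolynomial.smul_monomial, smul_eq_mul, ha,
        add_tsub_cancel_right, mul_assoc, ← Int.cast_mul,
        fsign_mul_self v (τ \ {v}) (by simp), Int.cast_one, mul_one]
    · intro j hj hjv
      rw [Hmap_single_monomial, termH_zero_of D h (hdeg j hj)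
        (by simp [Finset.mem_sdiff, hvτ, Ne.symm hjv, ← hv] ), smul_zero]
  · -- v ∉ τ
    have hmsi : (insert v τ).sup D ≤ a := by
      rw [Finset.sup_insert]; exact sup_le hva hms
    have e1 : taylorD k n q D (Hmap D h (Finsupp.single τ (monomial b c)))
        = Finsupp.single τ (monomial b c)
          + ∑ j ∈ τ, Finsupp.single (insert v (τ \ {j}))
              (monomial (a - (insert v (τ \ {j})).sup D)
                ((c * ((fsign {v} τ : ℤ) : k)) * ((fsign {j} (insert v (τ \ {j})) : ℤ) : k))) := by
      rw [Hmap_single_monomial, termH_eq_of D h rfl hV hvτ, Finsupp.smul_single,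
        MvPolynomial.smul_monomial, smul_eq_mul, ← ha, ← hv,
        taylorD_single_monomial, Finset.sum_insert hvτ]
      congr 1
      · have hvv : (insert v τ) \ {v} = τ := by
          rw [← Finset.erase_eq]; exact Finset.erase_insert hvτ
        rw [hvv, tsub_add_tsub_cancel hmsi (Finset.sup_mono (Finset.subset_insert v τ)),
          ha, add_tsub_cancel_right]
        congr 1
        rw [mul_assoc, ← Int.cast_mul, fsign_mul_self v τ hvτ, Int.cast_one, mul_one]
      · refine Finset.sum_congr rfl fun j hj => ?_
        have hvj : v ∉ ({j} : Finset (Fin q)) := by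
          simp only [Finset.mem_singleton]; exact fun e => hvτ (e ▸ hj)
        rw [Finset.insert_sdiff_of_notMem _ hvj,
          tsub_add_tsub_cancel hmsi
            (Finset.sup_mono (Finset.insert_subset_insert v Finset.sdiff_subset))]
    have e2 : Hmap D h (taylorD k n q D (Finsupp.single τ (monomial b c)))
        = ∑ j ∈ τ, Finsupp.single (insert v (τ \ {j}))
            (monomial (a - (insert v (τ \ {j})).sup D)
              ((c * ((fsign {j} (τ \ {j}) : ℤ) : k)) * ((fsign {v} (τ \ {j}) : ℤ) : k))) := by
      rw [taylorD_single_monomial, map_sum]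
      refine Finset.sum_congr rfl fun j hj => ?_
      rw [Hmap_single_monomial,
        termH_eq_of D h (hdeg j hj) hV (fun hc => hvτ (Finset.mem_sdiff.mp hc).1),
        ← hv, Finsupp.smul_single, MvPolynomial.smul_monomial, smul_eq_mul]
    rw [e1, e2, add_assoc, ← Finset.sum_add_distrib]
    have hzero : ∑ j ∈ τ, (Finsupp.single (insert v (τ \ {j}))
          (monomial (a - (insert v (τ \ {j})).sup D)
            ((c * ((fsign {v} τ : ℤ) : k)) * ((fsign {j} (insert v (τ \ {j})) : ℤ) : k)))
        + Finsupp.single (insert v (τ \ {j}))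
          (monomial (a - (insert v (τ \ {j})).sup D)
            ((c * ((fsign {j} (τ \ {j}) : ℤ) : k)) * ((fsign {v} (τ \ {j}) : ℤ) : k)))) = 0 := by
      refine Finset.sum_eq_zero fun j hj => ?_
      rw [← Finsupp.single_add, ← map_add]
      have hins : insert j (τ \ {j}) = τ := by
        rw [← Finset.erase_eq]; exact Finset.insert_erase hj
      have hz : fsign {v} τ * fsign {j} (insert v (τ \ {j}))
          + fsign {j} (τ \ {j}) * fsign {v} (τ \ {j}) = 0 := by
        have hanti := fsign_anticomm v j (τ \ {j})
          (fun hc => hvτ (Finset.mem_sdiff.mp hc).1) (by simp) (fun e => hvτ (e ▸ hj))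
        rw [hins] at hanti
        linarith
      have hcoef : (c * ((fsign {v} τ : ℤ) : k)) * ((fsign {j} (insert v (τ \ {j})) : ℤ) : k)
          + (c * ((fsign {j} (τ \ {j}) : ℤ) : k)) * ((fsign {v} (τ \ {j}) : ℤ) : k)
          = c * (((fsign {v} τ * fsign {j} (insert v (τ \ {j}))
              + fsign {j} (τ \ {j}) * fsign {v} (τ \ {j}) : ℤ)) : k) := by
        push_cast; ring
      rw [hcoef, hz, Int.cast_zero, mul_zero, map_zero, Finsupp.single_zero]
    rw [hzero, add_zero]

end Homotopy

section Global
variable {k : Type*} [Field k] {n q : ℕ} (D : Fin q → (Fin n →₀ ℕ)) (h : Fin q)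

lemma totmod_eq_sum (x : TotMod k n q) :
    x = ∑ τ ∈ x.support, ∑ b ∈ (x τ).support,
        Finsupp.single τ (monomial b (coeff b (x τ))) := by
  conv_lhs => rw [← Finsupp.sum_single x]
  rw [Finsupp.sum]
  refine Finset.sum_congr rfl fun τ hτ => ?_
  calc Finsupp.single τ (x τ)
      = (Finsupp.lsingle τ : MvPolynomial (Fin n) k →ₗ[MvPolynomial (Fin n) k] TotMod k n q)
          (∑ b ∈ (x τ).support, monomial b (coeff b (x τ))) := by
        rw [support_sum_monomial_coeff]; rfl
    _ = _ := map_sum _ _ _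

lemma homotopy_global (x : TotMod k n q)
    (hx : ∀ τ ∈ x.support, ∀ b ∈ (x τ).support,
      (Va D (b + τ.sup D) : Finset (Fin q)).Nonempty) :
    taylorD k n q D (Hmap D h x) + Hmap D h (taylorD k n q D x) = x := by
  conv_lhs => rw [totmod_eq_sum x]
  conv_rhs => rw [totmod_eq_sum x]
  simp only [map_sum]
  rw [← Finset.sum_add_distrib]
  refine Finset.sum_congr rfl fun τ hτ => ?_
  rw [← Finset.sum_add_distrib]
  refine Finset.sum_congr rfl fun b hb => ?_
  exact homotopy_term D h τ b _ (hx τ hτ b hb)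

lemma termH_mem_piece {S : Finset (Fin q)} (hgap : h ∉ S) (hdvd : D h ≤ S.sup D)
    {i : ℕ} {τ : Finset (Fin q)} (hτΩ : ¬ S ⊆ τ) (hτc : τ.card = i)
    (b : Fin n →₀ ℕ) :
    (termH D h τ b : TotMod k n q) ∈ piece k n q (pivotΩ S) (i + 1) := by
  rw [termH]
  split_ifs with h1 h2
  · exact Submodule.zero_mem _
  · refine Finsupp.single_mem_supported _ _ ?_
    constructor
    · exact pick_keeps D h hgap hdvd le_add_self hτΩ
    · rw [Finset.card_insert_of_notMem h2, hτc]
  · exact Submodule.zero_mem _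

lemma Hmap_mem_piece {S : Finset (Fin q)} (hgap : h ∉ S) (hdvd : D h ≤ S.sup D)
    {i : ℕ} {x : TotMod k n q} (hx : x ∈ piece k n q (pivotΩ S) i) :
    Hmap D h x ∈ piece k n q (pivotΩ S) (i + 1) := by
  rw [totmod_eq_sum x, map_sum]
  refine Submodule.sum_mem _ fun τ hτ => ?_
  rw [map_sum]
  refine Submodule.sum_mem _ fun b hb => ?_
  rw [Hmap_single_monomial]
  have hτs : τ ∈ {τ : Finset (Fin q) | τ ∈ pivotΩ S ∧ τ.card = i} :=
    (Finsupp.mem_supported _ _).mp hx hτ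
  exact Submodule.smul_of_tower_mem _ _ (termH_mem_piece D h hgap hdvd hτs.1 hτs.2 b)

lemma mem_Va_of_mem {τ : Finset (Fin q)} {j : Fin q} (hj : j ∈ τ) (b : Fin n →₀ ℕ) :
    j ∈ (Va D (b + τ.sup D) : Finset (Fin q)) := by
  simp only [Va, Finset.mem_filter, Finset.mem_univ, true_and]
  exact le_trans (Finset.le_sup hj) le_add_self

end Global

section Resolution
variable {k : Type*} [Field k] {n q : ℕ} (D : Fin q → (Fin n →₀ ℕ)) (h : Fin q)

lemma isResolution_pivot {S : Finset (Fin q)} (hgap : h ∉ S) (hdvd : D h ≤ S.sup D)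
    (hS2 : 2 ≤ S.card) : IsResolutionOf k n q D (pivotΩ S) := by
  constructor
  · intro i x hx hd
    refine ⟨Hmap D h x, Hmap_mem_piece D h hgap hdvd hx, ?_⟩
    have hg := homotopy_global D h x ?_
    · rw [hd, map_zero, add_zero] at hg; exact hg
    · intro τ hτ b hb
      have hc : τ.card = i + 1 := ((Finsupp.mem_supported _ _).mp hx hτ).2
      obtain ⟨j, hj⟩ := Finset.card_pos.mp (by omega : 0 < τ.card)
      exact ⟨j, mem_Va_of_mem D hj b⟩
  · intro x hx
    have hxeq : x = Finsupp.single ∅ (x ∅) := by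
      refine Finsupp.ext fun σ => ?_
      by_cases hσ : σ = ∅
      · subst hσ; simp
      · rw [Finsupp.single_apply, if_neg (Ne.symm hσ)]
        by_contra hne
        have hσs : σ ∈ x.support := Finsupp.mem_support_iff.mpr hne
        exact hσ (Finset.card_eq_zero.mp ((Finsupp.mem_supported _ _).mp hx hσs).2)
    constructor
    · intro hmem
      refine ⟨Hmap D h x, Hmap_mem_piece D h hgap hdvd hx, ?_⟩
      have hg := homotopy_global D h x ?_
      · have hdx : taylorD k n q D x = 0 := by
          rw [hxeq, taylorD_single]
          simp
        rw [hdx, map_zero, add_zero] at hg; exact hg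
      · intro τ hτ b hb
        have hτe : τ = ∅ :=
          Finset.card_eq_zero.mp ((Finsupp.mem_supported _ _).mp hx hτ).2
        subst hτe
        rw [monIdeal, show (Set.range fun i => (monomial (D i) (1:k)))
            = ((fun s => (monomial s (1:k))) '' Set.range D) by
          rw [← Set.range_comp]; rfl] at hmem
        obtain ⟨d, ⟨i0, rfl⟩, hle⟩ :=
          MvPolynomial.mem_ideal_span_monomial_image.mp hmem b hb
        refine ⟨i0, ?_⟩
        simp only [Va, Finset.mem_filter, Finset.mem_univ, true_and]
        exact le_trans hle le_self_add
    · rintro ⟨y, hy, hdy⟩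
      rw [← hdy, ← Finsupp.sum_single y, Finsupp.sum, map_sum, Finsupp.finset_sum_apply]
      refine Ideal.sum_mem _ fun τ hτ => ?_
      have hτ1 : τ.card = 1 := ((Finsupp.mem_supported _ _).mp hy hτ).2
      obtain ⟨j, rfl⟩ := Finset.card_eq_one.mp hτ1
      rw [taylorD_single, Finset.sum_singleton, Finset.sdiff_self, Finsupp.single_eq_same]
      have hmono : (monomial (({j} : Finset (Fin q)).sup D
          - (∅ : Finset (Fin q)).sup D) (1:k)) ∈ monIdeal k n q D := by
        rw [Finset.sup_singleton, Finset.sup_empty, bot_eq_zero, tsub_zero]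
        exact Ideal.subset_span ⟨j, rfl⟩
      exact Ideal.mul_mem_left _ _ (Ideal.mul_mem_left _ _ hmono)

end Resolution

section Count
variable {k : Type*} [Field k] {n q : ℕ}

lemma finrank_piece (S : Finset (Fin q)) (i : ℕ) :
    Module.finrank (MvPolynomial (Fin n) k) ↥(piece k n q (pivotΩ S) i)
      = q.choose i - (if S.card ≤ i then (q - S.card).choose (i - S.card) else 0) := by
  classical
  have e1 : Module.finrank (MvPolynomial (Fin n) k) ↥(piece k n q (pivotΩ S) i)
      = Fintype.card ↥{τ : Finset (Fin q) | τ ∈ pivotΩ S ∧ τ.card = i} := by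
    rw [piece]
    rw [(Finsupp.supportedEquivFinsupp
      (M := MvPolynomial (Fin n) k) (R := MvPolynomial (Fin n) k)
      {τ : Finset (Fin q) | τ ∈ pivotΩ S ∧ τ.card = i}).finrank_eq]
    exact Module.finrank_finsupp_self _
  rw [e1, ← Set.toFinset_card, Set.toFinset_setOf]
  have hall : (Finset.univ.filter fun τ : Finset (Fin q) => τ.card = i).card = q.choose i := by
    rw [show (Finset.univ.filter fun τ : Finset (Fin q) => τ.card = i)
        = Finset.powersetCard i Finset.univ by
      rw [Finset.powersetCard_eq_filter, Finset.powerset_univ]]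
    rw [Finset.card_powersetCard, Finset.card_univ, Fintype.card_fin]
  have hsplit := Finset.card_filter_add_card_filter_not
    (s := Finset.univ.filter fun τ : Finset (Fin q) => τ.card = i) (p := fun τ => S ⊆ τ)
  rw [Finset.filter_filter, Finset.filter_filter] at hsplit
  have hsub : (Finset.univ.filter fun τ : Finset (Fin q) => τ.card = i ∧ S ⊆ τ).card
      = if S.card ≤ i then (q - S.card).choose (i - S.card) else 0 := by
    split_ifs with hli
    · rw [show (q - S.card).choose (i - S.card) = (Finset.powersetCard (i - S.card) Sᶜ).card by
        rw [Finset.card_powersetCard, Finset.card_compl, Fintype.card_fin]]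
      refine Finset.card_bij' (fun τ _ => τ \ S) (fun σ _ => σ ∪ S) ?_ ?_ ?_ ?_
      · intro τ hτ
        obtain ⟨-, hci, hst⟩ : τ ∈ Finset.univ ∧ τ.card = i ∧ S ⊆ τ := by
          simpa using hτ
        rw [Finset.mem_powersetCard]
        exact ⟨fun x hx => Finset.mem_compl.mpr (Finset.mem_sdiff.mp hx).2,
          by rw [Finset.card_sdiff_of_subset hst, hci]⟩
      · intro σ hσ
        obtain ⟨hsc, hcard⟩ := Finset.mem_powersetCard.mp hσ
        have hdisj : Disjoint σ S := Finset.disjoint_left.mpr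
          fun x hx hxS => Finset.mem_compl.mp (hsc hx) hxS
        simp only [Finset.mem_filter, Finset.mem_univ, true_and]
        exact ⟨by rw [Finset.card_union_of_disjoint hdisj, hcard, Nat.sub_add_cancel hli],
          Finset.subset_union_right⟩
      · intro τ hτ
        obtain ⟨-, hci, hst⟩ : τ ∈ Finset.univ ∧ τ.card = i ∧ S ⊆ τ := by simpa using hτ
        exact Finset.sdiff_union_of_subset hst
      · intro σ hσ
        obtain ⟨hsc, hcard⟩ := Finset.mem_powersetCard.mp hσ
        exact Finset.union_sdiff_cancel_right (Finset.disjoint_left.mpr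
          fun x hx hxS => Finset.mem_compl.mp (hsc hx) hxS)
    · refine Finset.card_eq_zero.mpr (Finset.filter_eq_empty_iff.mpr ?_)
      rintro τ - ⟨hcard, hsub⟩
      exact hli (hcard ▸ Finset.card_le_card hsub)
  have hmatch : (Finset.univ.filter fun τ : Finset (Fin q) => τ ∈ pivotΩ S ∧ τ.card = i)
      = Finset.univ.filter fun τ : Finset (Fin q) => τ.card = i ∧ ¬ S ⊆ τ := by
    ext τ
    simp only [Finset.mem_filter, Finset.mem_univ, true_and, pivotΩ, Set.mem_setOf_eq]
    tauto
  rw [hmatch, ← hall, ← hsplit, hsub]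
  omega

end Count

section Mono
variable {k : Type*} [Field k] {n : ℕ}

lemma mono_dvd_of_le {d e : Fin n →₀ ℕ} (hle : d ≤ e) :
    (monomial d (1:k)) ∣ monomial e 1 :=
  ⟨monomial (e - d) 1, by rw [MvPolynomial.monomial_mul, add_tsub_cancel_of_le hle, one_mul]⟩

end Mono


/-- **The smallest pivot resolution.**
Suppose `l := scarf(I) < ∞` (the Scarf set is nonempty).  Then there is a set `S`
of `l` indices having a gap, so that the pivot complex `T_S` is a resolution of
`Q/I`, and for every `i` the `i`-th free module of this pivot resolution has rank
`binom(q,i) − binom(q−l, i−l)` (with `binom(q−l, i−l) = 0` when `i < l`). -/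
theorem exists_smallest_pivot_resolution {k : Type*} [Field k] {n q : ℕ}
    (D : Fin q → (Fin n →₀ ℕ))
    (hne : ∀ i : Fin q, D i ≠ 0)
    (hmin : ∀ i j : Fin q, i ≠ j → ¬ lcmMono k n q D {i} ∣ lcmMono k n q D {j})
    (hfin : (scarfSet k n q D).Nonempty) :
    ∃ S : Finset (Fin q), S.card = sInf (scarfSet k n q D) ∧
      (∃ h : Fin q, h ∉ S ∧ lcmMono k n q D {h} ∣ lcmMono k n q D S) ∧
      IsResolutionOf k n q D (pivotΩ S) ∧
      ∀ i : ℕ, Module.finrank (MvPolynomial (Fin n) k) ↥(piece k n q (pivotΩ S) i) =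
        q.choose i -
          (if sInf (scarfSet k n q D) ≤ i then
            (q - sInf (scarfSet k n q D)).choose (i - sInf (scarfSet k n q D))
          else 0) := by
  classical
  obtain ⟨τ, τ', hne', hcard, hlcm⟩ := Nat.sInf_mem hfin
  have hsup : τ.sup D = τ'.sup D := by
    rw [lcmMono, lcmMono] at hlcm
    rcases (MvPolynomial.monomial_eq_monomial_iff _ _ _ _).mp hlcm with ⟨h1, -⟩ | ⟨h1, -⟩
    · exact h1
    · exact absurd h1 one_ne_zero
  have hl2 : 2 ≤ τ.card := by
    by_contra hlt
    push_neg at hlt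
    rcases (by omega : τ.card = 0 ∨ τ.card = 1) with h0 | h1
    · have hτe : τ = ∅ := Finset.card_eq_zero.mp h0
      subst hτe
      have hτ'ne : τ'.Nonempty := by
        rcases Finset.eq_empty_or_nonempty τ' with rfl | hne2
        · exact absurd rfl hne'
        · exact hne2
      obtain ⟨j, hj⟩ := hτ'ne
      have hj0 : D j ≤ (⊥ : Fin n →₀ ℕ) := by
        calc D j ≤ τ'.sup D := Finset.le_sup hj
        _ = (∅ : Finset (Fin q)).sup D := hsup.symm
        _ = ⊥ := Finset.sup_empty
      exact hne j (by simpa [Finsupp.bot_eq_zero] using le_bot_iff.mp hj0)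
    · obtain ⟨i0, rfl⟩ := Finset.card_eq_one.mp h1
      rcases Finset.eq_empty_or_nonempty τ' with rfl | ⟨j, hj⟩
      · have h0' : D i0 = (⊥ : Fin n →₀ ℕ) := by
          calc D i0 = ({i0} : Finset (Fin q)).sup D := Finset.sup_singleton.symm
          _ = (∅ : Finset (Fin q)).sup D := hsup
          _ = ⊥ := Finset.sup_empty
        exact hne i0 (by simpa [Finsupp.bot_eq_zero] using h0')
      · by_cases hall : ∀ x ∈ τ', x = i0
        · apply hne'
          have hss : τ' ⊆ {i0} := fun x hx => Finset.mem_singleton.mpr (hall x hx)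
          rcases Finset.subset_singleton_iff.mp hss with rfl | rfl
          · simp at hj
          · rfl
        · push_neg at hall
          obtain ⟨x, hx, hxne⟩ := hall
          have hxle : D x ≤ D i0 := by
            calc D x ≤ τ'.sup D := Finset.le_sup hx
            _ = ({i0} : Finset (Fin q)).sup D := hsup.symm
            _ = D i0 := Finset.sup_singleton
          exact hmin x i0 hxne
            (by rw [lcmMono, lcmMono, Finset.sup_singleton, Finset.sup_singleton]
                exact mono_dvd_of_le hxle)
  have hτ'ns : ¬ τ' ⊆ τ := by
    intro hss
    have hssne : τ' ⊂ τ := Finset.ssubset_iff_subset_ne.mpr ⟨hss, Ne.symm hne'⟩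
    have hclt : τ'.card < τ.card := Finset.card_lt_card hssne
    have hsc : τ'.card ∈ scarfSet k n q D := ⟨τ', τ, Ne.symm hne', rfl, hlcm.symm⟩
    have hle := Nat.sInf_le hsc
    omega
  obtain ⟨h0, hmem, hnotin⟩ := Finset.not_subset.mp hτ'ns
  have hgle : D h0 ≤ τ.sup D := by rw [hsup]; exact Finset.le_sup hmem
  refine ⟨τ, hcard, ⟨h0, hnotin, ?_⟩, ?_, ?_⟩
  · rw [lcmMono, lcmMono, Finset.sup_singleton]
    exact mono_dvd_of_le hgle
  · exact isResolution_pivot D h0 hnotin hgle hl2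
  · intro i
    rw [finrank_piece τ i, hcard]
end

section
/- For each s ∈ [r], the map ∂σ_{e_s} + σ_{e_s}∂ equals multiplication by a_s on the pivot resolution T_{1,…,l}. -/
open MvPolynomial Finset

noncomputable section

/-- The index set `[l] = {1,…,l}`, realized as the first `l` elements of `Fin q`. -/
def Lset (q l : ℕ) : Finset (Fin q) :=
  Finset.univ.filter fun i => (i : ℕ) < l

/-- The pivot index `l+1`, realized as the element of `Fin q` with value `l`. -/
def pivElt (q l : ℕ) (hq : l < q) : Fin q := ⟨l, hq⟩

/-- The unique element `t` of `[l] ∖ A` (when it exists). -/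
def tOf (q l : ℕ) (hq : l < q) (A : Finset (Fin q)) : Fin q :=
  if h : (Lset q l \ A).Nonempty then (Lset q l \ A).min' h else pivElt q l hq

/-- The sum `Σ_{j ∈ J} sign(j,A) a_{sj} (m_j m_A / m_{A∪{j}}) ε_{A∪{j}}`,
where `c j = a_{sj}`. -/
def sigTerm (k : Type*) [Field k] (n q : ℕ) (D : Fin q → (Fin n →₀ ℕ))
    (c : Fin q → MvPolynomial (Fin n) k) (A J : Finset (Fin q)) : TotMod k n q :=
  ∑ j ∈ J, Finsupp.single (insert j A)
    ((fsign {j} A : MvPolynomial (Fin n) k) * c j *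
      monomial (D j + A.sup D - (insert j A).sup D) (1 : k))

/-- The correction term
`(−1)^{l+1} sign(t,A) a_{st} Σ_{i∈[l]} sign(i, A∪{t}∖{i})
  (m_t m_A / m_{A∪{t}∪{l+1}∖{i}}) ε_{A∪{t}∪{l+1}∖{i}}`. -/
def sigCorr (k : Type*) [Field k] (n q l : ℕ) (hq : l < q)
    (D : Fin q → (Fin n →₀ ℕ)) (c : Fin q → MvPolynomial (Fin n) k)
    (A : Finset (Fin q)) (t : Fin q) : TotMod k n q :=
  ∑ i ∈ Lset q l, Finsupp.single ((insert (pivElt q l hq) (insert t A)) \ {i})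
    ((-1 : MvPolynomial (Fin n) k) ^ (l + 1) *
      (fsign {t} A : MvPolynomial (Fin n) k) * c t *
      (fsign {i} (insert t A \ {i}) : MvPolynomial (Fin n) k) *
      monomial (D t + A.sup D - ((insert (pivElt q l hq) (insert t A)) \ {i}).sup D)
        (1 : k))

/-- The homotopy `σ_{e_s}` (for coefficients `c j = a_{sj}`), defined on basis
elements `ε_A` by the three-case formula of Theorem 5.1 of the paper. -/
def sigmaMap (k : Type*) [Field k] (n q l : ℕ) (hq : l < q)
    (D : Fin q → (Fin n →₀ ℕ)) (c : Fin q → MvPolynomial (Fin n) k) :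
    TotMod k n q →ₗ[MvPolynomial (Fin n) k] TotMod k n q :=
  Finsupp.linearCombination _ fun A =>
    if (A ∩ Lset q l).card ≠ l - 1 then
      sigTerm k n q D c A Aᶜ
    else if pivElt q l hq ∈ A then
      sigTerm k n q D c A (insert (tOf q l hq A) A)ᶜ
    else
      sigTerm k n q D c A (insert (tOf q l hq A) A)ᶜ +
        sigCorr k n q l hq D c A (tOf q l hq A)

/-- The element `a_s = Σ_{j=1}^q a_{sj} m_j`, for coefficients `c j = a_{sj}`. -/
def aElt (k : Type*) [Field k] (n q : ℕ) (D : Fin q → (Fin n →₀ ℕ))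
    (c : Fin q → MvPolynomial (Fin n) k) : MvPolynomial (Fin n) k :=
  ∑ j : Fin q, c j * monomial (D j) (1 : k)
end

/-!
The map `σ_{e_s}` is the classical contracting homotopy `σ` of the full Taylor complex
(`∂σ + σ∂ = a_s`) transported along a retraction `π` of the Taylor complex onto the pivot
complex: `σ_{e_s} = π ∘ σ` on `T_{1,…,l}`. Because `m_{l+1} ∣ m_{[l]}`, the matching
`ε_B ↔ ε_{B ∪ {l+1}}` (`[l] ⊆ B ∌ l+1`) pairs basis elements of the same multidegree, so it is an
algebraic Morse matching with contraction `h(ε_B) = sign(l+1, B) ε_{B ∪ {l+1}}`, and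
`π = 1 - (∂h + h∂)`. As `∂² = 0`, `π` is a chain map; it fixes the pivot complex, hence
`∂πσ + πσ∂ = π(∂σ + σ∂) = a_s` there. Cases (ii) and (iii) of `σ_{e_s}` record what `π` does to
the one term of `σ(ε_A)` that leaves the pivot complex.
-/

section Sign

variable {α : Type*} [LinearOrder α] [DecidableEq α] {i j : α} {T : Finset α}

theorem fsign_singleton_of_notMem (h : j ∉ T) :
    fsign {j} T = (-1) ^ (T.filter (· < j)).card := by
  rw [fsign, if_pos (by simp [Finset.singleton_inter_of_notMem h]), Finset.singleton_product,
    Finset.filter_map, Finset.card_map]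
  rfl

theorem fsign_mul_self_s12 (h : j ∉ T) : fsign {j} T * fsign {j} T = 1 := by
  rw [fsign_singleton_of_notMem h, ← pow_add, ← two_mul, pow_mul]
  norm_num

theorem fsign_insert_of_lt (hj : j ∉ T) (hi : i ∉ T) (hij : i < j) :
    fsign {j} (insert i T) = -fsign {j} T := by
  rw [fsign_singleton_of_notMem (by simp [hij.ne', hj]), fsign_singleton_of_notMem hj,
    Finset.filter_insert, if_pos hij, Finset.card_insert_of_notMem (by simp [hi]), pow_succ,
    mul_neg_one]

theorem fsign_insert_of_gt (hj : j ∉ T) (hij : j < i) :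
    fsign {j} (insert i T) = fsign {j} T := by
  rw [fsign_singleton_of_notMem (by simp [hij.ne, hj]), fsign_singleton_of_notMem hj,
    Finset.filter_insert, if_neg hij.not_gt]

theorem fsign_insert_mul_fsign_insert (hij : i ≠ j) (hi : i ∉ T) (hj : j ∉ T) :
    fsign {j} (insert i T) * fsign {i} (insert j T) = -(fsign {i} T * fsign {j} T) := by
  rcases hij.lt_or_gt with h | h
  · rw [fsign_insert_of_lt hj hi h, fsign_insert_of_gt hi h]; ring
  · rw [fsign_insert_of_gt hj h, fsign_insert_of_lt hi hj h]; ring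

theorem fsign_insert_mul_add_fsign_insert_mul (hij : i ≠ j) (hi : i ∉ T) (hj : j ∉ T) :
    fsign {j} (insert i T) * fsign {i} T + fsign {i} (insert j T) * fsign {j} T = 0 := by
  rcases hij.lt_or_gt with h | h
  · rw [fsign_insert_of_lt hj hi h, fsign_insert_of_gt hi h]; ring
  · rw [fsign_insert_of_gt hj h, fsign_insert_of_lt hi hj h]; ring

end Sign

noncomputable section Taylor

variable (k : Type*) [Field k] {n q : ℕ} (D : Fin q → (Fin n →₀ ℕ))

def faceCoeff (T : Finset (Fin q)) (j : Fin q) : MvPolynomial (Fin n) k :=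
  (fsign {j} (T \ {j}) : MvPolynomial (Fin n) k) * monomial (T.sup D - (T \ {j}).sup D) 1

def faceSum (T J : Finset (Fin q)) : TotMod k n q :=
  ∑ j ∈ J, Finsupp.single (T \ {j}) (faceCoeff k D T j)

variable {k D}

theorem taylorD_single_s12 (T : Finset (Fin q)) (r : MvPolynomial (Fin n) k) :
    taylorD k n q D (Finsupp.single T r) = r • faceSum k D T T := by
  rw [taylorD, Finsupp.linearCombination_single]
  rfl

theorem faceCoeff_mul_add_faceCoeff_mul {S : Finset (Fin q)} {i j : Fin q} (hi : i ∈ S)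
    (hj : j ∈ S) (hij : i ≠ j) :
    faceCoeff k D S j * faceCoeff k D (S \ {j}) i +
      faceCoeff k D S i * faceCoeff k D (S \ {i}) j = 0 := by
  set T := (S \ {j}) \ {i}
  have hiT : i ∉ T := by simp [T]
  have hjT : j ∉ T := by simp [T]
  have hSj : S \ {j} = insert i T := by grind
  have hSi : S \ {i} = insert j T := by grind
  have hTi : insert i T \ {i} = T := by grind
  have hTj : insert j T \ {j} = T := by grind
  have hmon : ∀ x ∈ S, monomial (S.sup D - (insert x T).sup D) (1 : k) *
      monomial ((insert x T).sup D - T.sup D) 1 = monomial (S.sup D - T.sup D) 1 :=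
    fun x hx => by
      rw [monomial_mul, mul_one, tsub_add_tsub_cancel (Finset.sup_mono (by grind))
        (Finset.sup_mono (Finset.subset_insert x T))]
  have hsign := congrArg (Int.cast : ℤ → MvPolynomial (Fin n) k)
    (fsign_insert_mul_add_fsign_insert_mul hij hiT hjT)
  push_cast at hsign
  simp only [faceCoeff, hSj, hSi, hTi, hTj]
  linear_combination
    (fsign {j} (insert i T) * fsign {i} T : MvPolynomial (Fin n) k) * hmon i hi +
    (fsign {i} (insert j T) * fsign {j} T : MvPolynomial (Fin n) k) * hmon j hj +
    monomial (S.sup D - T.sup D) 1 * hsign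

theorem taylorD_taylorD_single (S : Finset (Fin q)) :
    taylorD k n q D (taylorD k n q D (Finsupp.single S 1)) = 0 := by
  simp only [taylorD_single_s12, one_smul, faceSum, map_sum, Finset.smul_sum, Finsupp.smul_single,
    smul_eq_mul]
  rw [Finset.sum_sigma']
  refine Finset.sum_involution (fun x _ => ⟨x.2, x.1⟩) ?_ ?_ ?_ (fun _ _ => rfl)
  · rintro ⟨j, i⟩ hx
    simp only [Finset.mem_sigma, Finset.mem_sdiff, Finset.mem_singleton] at hx
    rw [sdiff_sdiff_comm, ← Finsupp.single_add,
      faceCoeff_mul_add_faceCoeff_mul hx.2.1 hx.1 hx.2.2, Finsupp.single_zero]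
  · rintro ⟨j, i⟩ hx - h
    simp only [Finset.mem_sigma, Finset.mem_sdiff, Finset.mem_singleton] at hx
    exact hx.2.2 (congrArg Sigma.fst h)
  · rintro ⟨j, i⟩ hx
    simp only [Finset.mem_sigma, Finset.mem_sdiff, Finset.mem_singleton] at hx ⊢
    exact ⟨hx.2.1, hx.1, Ne.symm hx.2.2⟩

theorem taylorD_taylorD (x : TotMod k n q) : taylorD k n q D (taylorD k n q D x) = 0 := by
  induction x using Finsupp.induction_linear with
  | zero => simp
  | add x y hx hy => simp [hx, hy]
  | single S r =>
    rw [← mul_one r, ← smul_eq_mul, ← Finsupp.smul_single, map_smul, map_smul,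
      taylorD_taylorD_single, smul_zero]

theorem taylorD_mem_subcx {S : Finset (Fin q)} {x : TotMod k n q}
    (hx : x ∈ subcx k n q (pivotΩ S)) : taylorD k n q D x ∈ subcx k n q (pivotΩ S) := by
  rw [subcx, Finsupp.supported_eq_span_single] at hx ⊢
  induction hx using Submodule.span_induction with
  | zero => simp
  | add x y _ _ hx hy => rw [map_add]; exact Submodule.add_mem _ hx hy
  | smul r x _ hx => rw [map_smul]; exact Submodule.smul_mem _ r hx
  | mem x hx =>
    obtain ⟨B, hB, rfl⟩ := hx
    rw [taylorD_single_s12, one_smul, faceSum]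
    refine Submodule.sum_mem _ fun j _ => ?_
    rw [← Finsupp.supported_eq_span_single]
    exact Finsupp.single_mem_supported _ _ fun h => hB (h.trans Finset.sdiff_subset)

end Taylor

noncomputable section TaylorHomotopy

variable {k : Type*} [Field k] {n q : ℕ} (D : Fin q → (Fin n →₀ ℕ))
  (c : Fin q → MvPolynomial (Fin n) k)

def extCoeff (A : Finset (Fin q)) (j : Fin q) : MvPolynomial (Fin n) k :=
  (fsign {j} A : MvPolynomial (Fin n) k) * c j *
    monomial (D j + A.sup D - (insert j A).sup D) 1

theorem sigTerm_eq_sum_extCoeff (A J : Finset (Fin q)) :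
    sigTerm k n q D c A J = ∑ j ∈ J, Finsupp.single (insert j A) (extCoeff D c A j) :=
  rfl

def taylorHomotopy : TotMod k n q →ₗ[MvPolynomial (Fin n) k] TotMod k n q :=
  Finsupp.linearCombination _ fun A => sigTerm k n q D c A Aᶜ

variable {D c}

theorem taylorHomotopy_single (A : Finset (Fin q)) (r : MvPolynomial (Fin n) k) :
    taylorHomotopy D c (Finsupp.single A r) = r • sigTerm k n q D c A Aᶜ := by
  rw [taylorHomotopy, Finsupp.linearCombination_single]

theorem sup_insert_le_add (j : Fin q) (A : Finset (Fin q)) :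
    (insert j A).sup D ≤ D j + A.sup D := by
  rw [Finset.sup_insert]
  exact sup_le (le_add_right le_rfl) (le_add_left le_rfl)

theorem tsub_add_add_tsub {a b u s : Fin n →₀ ℕ} (hb : b ≤ a) (hs : s ≤ u + b) :
    a - b + (u + b - s) = u + a - s := by
  rw [tsub_add_tsub_comm hb hs, add_left_comm, add_comm b s, ← add_assoc,
    add_tsub_add_eq_tsub_right]

theorem extCoeff_mul_faceCoeff_insert {A : Finset (Fin q)} {j : Fin q} (hj : j ∉ A) :
    extCoeff D c A j * faceCoeff k D (insert j A) j = c j * monomial (D j) 1 := by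
  have hA : insert j A \ {j} = A := by grind
  have hmon : monomial (D j + A.sup D - (insert j A).sup D) (1 : k) *
      monomial ((insert j A).sup D - A.sup D) 1 = monomial (D j) 1 := by
    rw [monomial_mul, mul_one, tsub_add_tsub_cancel (sup_insert_le_add j A)
      (Finset.sup_mono (Finset.subset_insert j A)), add_tsub_cancel_right]
  have hsign := congrArg (Int.cast : ℤ → MvPolynomial (Fin n) k) (fsign_mul_self_s12 hj)
  push_cast at hsign
  rw [extCoeff, faceCoeff, hA]
  linear_combination (fsign {j} A * fsign {j} A : MvPolynomial (Fin n) k) * c j * hmon +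
    c j * monomial (D j) 1 * hsign

theorem extCoeff_mul_faceCoeff_add_faceCoeff_mul_extCoeff {A : Finset (Fin q)} {i j : Fin q}
    (hi : i ∈ A) (hj : j ∉ A) :
    extCoeff D c A j * faceCoeff k D (insert j A) i +
      faceCoeff k D A i * extCoeff D c (A \ {i}) j = 0 := by
  set T := A \ {i}
  have hij : i ≠ j := by rintro rfl; exact hj hi
  have hiT : i ∉ T := by simp [T]
  have hjT : j ∉ T := by simp [T, hj]
  have hA : A = insert i T := by grind
  have hjA : insert j A \ {i} = insert j T := by grind
  have hmon₁ : monomial (D j + A.sup D - (insert j A).sup D) (1 : k) *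
      monomial ((insert j A).sup D - (insert j T).sup D) 1 =
        monomial (D j + A.sup D - (insert j T).sup D) 1 := by
    rw [monomial_mul, mul_one, tsub_add_tsub_cancel (sup_insert_le_add j A)
      (Finset.sup_mono (by grind))]
  have hmon₂ : monomial (A.sup D - T.sup D) (1 : k) *
      monomial (D j + T.sup D - (insert j T).sup D) 1 =
        monomial (D j + A.sup D - (insert j T).sup D) 1 := by
    rw [monomial_mul, mul_one, tsub_add_add_tsub (Finset.sup_mono Finset.sdiff_subset)
      (sup_insert_le_add j T)]
  have hsign := congrArg (Int.cast : ℤ → MvPolynomial (Fin n) k)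
    (fsign_insert_mul_fsign_insert hij hiT hjT)
  push_cast at hsign
  rw [← hA] at hsign
  rw [extCoeff, extCoeff, faceCoeff, faceCoeff, hjA]
  linear_combination
    (fsign {j} A * fsign {i} (insert j T) : MvPolynomial (Fin n) k) * c j * hmon₁ +
    (fsign {i} T * fsign {j} T : MvPolynomial (Fin n) k) * c j * hmon₂ +
    c j * monomial (D j + A.sup D - (insert j T).sup D) 1 * hsign

theorem taylorD_taylorHomotopy_single (A : Finset (Fin q)) :
    taylorD k n q D (taylorHomotopy D c (Finsupp.single A 1)) =
      ∑ j ∈ Aᶜ, (Finsupp.single A (c j * monomial (D j) 1) +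
        ∑ i ∈ A, Finsupp.single (insert j A \ {i})
          (extCoeff D c A j * faceCoeff k D (insert j A) i)) := by
  rw [taylorHomotopy_single, one_smul, sigTerm_eq_sum_extCoeff, map_sum]
  refine Finset.sum_congr rfl fun j hj => ?_
  have hjA : j ∉ A := Finset.mem_compl.1 hj
  rw [taylorD_single_s12, faceSum, Finset.sum_insert hjA, smul_add, Finsupp.smul_single, smul_eq_mul,
    extCoeff_mul_faceCoeff_insert hjA, show insert j A \ {j} = A by grind, Finset.smul_sum]
  simp only [Finsupp.smul_single, smul_eq_mul]

theorem taylorHomotopy_taylorD_single (A : Finset (Fin q)) :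
    taylorHomotopy D c (taylorD k n q D (Finsupp.single A 1)) =
      ∑ i ∈ A, (Finsupp.single A (c i * monomial (D i) 1) +
        ∑ j ∈ Aᶜ, Finsupp.single (insert j (A \ {i}))
          (faceCoeff k D A i * extCoeff D c (A \ {i}) j)) := by
  rw [taylorD_single_s12, one_smul, faceSum, map_sum]
  refine Finset.sum_congr rfl fun i hi => ?_
  have hiA : i ∉ A \ {i} := by simp
  have hA : insert i (A \ {i}) = A := by grind
  have hdiag := extCoeff_mul_faceCoeff_insert (D := D) (c := c) hiA
  rw [hA] at hdiag
  rw [taylorHomotopy_single, sigTerm_eq_sum_extCoeff, Finset.sdiff_singleton_eq_erase,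
    Finset.compl_erase, ← Finset.sdiff_singleton_eq_erase, Finset.sum_insert (by simpa using hi),
    smul_add, Finsupp.smul_single, smul_eq_mul, mul_comm, hdiag, hA, Finset.smul_sum]
  simp only [Finsupp.smul_single, smul_eq_mul]

theorem taylorD_taylorHomotopy_add_single (A : Finset (Fin q)) :
    taylorD k n q D (taylorHomotopy D c (Finsupp.single A 1)) +
      taylorHomotopy D c (taylorD k n q D (Finsupp.single A 1)) =
      aElt k n q D c • Finsupp.single A 1 := by
  have hdiag : ∑ j ∈ Aᶜ, Finsupp.single A (c j * monomial (D j) 1) +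
      ∑ i ∈ A, Finsupp.single A (c i * monomial (D i) 1) =
        aElt k n q D c • Finsupp.single A 1 := by
    rw [add_comm, Finset.sum_add_sum_compl, Finsupp.smul_single, smul_eq_mul, mul_one, aElt,
      Finsupp.single_finsetSum]
  have hcross : ∑ j ∈ Aᶜ, ∑ i ∈ A, Finsupp.single (insert j A \ {i})
        (extCoeff D c A j * faceCoeff k D (insert j A) i) +
      ∑ i ∈ A, ∑ j ∈ Aᶜ, Finsupp.single (insert j (A \ {i}))
        (faceCoeff k D A i * extCoeff D c (A \ {i}) j) = 0 := by
    rw [Finset.sum_comm (s := A), ← Finset.sum_add_distrib]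
    refine Finset.sum_eq_zero fun j hj => ?_
    rw [← Finset.sum_add_distrib]
    refine Finset.sum_eq_zero fun i hi => ?_
    have hjA : j ∉ A := Finset.mem_compl.1 hj
    rw [show insert j A \ {i} = insert j (A \ {i}) by grind, ← Finsupp.single_add,
      extCoeff_mul_faceCoeff_add_faceCoeff_mul_extCoeff hi hjA, Finsupp.single_zero]
  rw [taylorD_taylorHomotopy_single, taylorHomotopy_taylorD_single, Finset.sum_add_distrib,
    Finset.sum_add_distrib, add_add_add_comm, hdiag, hcross, add_zero]

theorem taylorD_taylorHomotopy_add (x : TotMod k n q) :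
    taylorD k n q D (taylorHomotopy D c x) + taylorHomotopy D c (taylorD k n q D x) =
      aElt k n q D c • x := by
  induction x using Finsupp.induction_linear with
  | zero => simp
  | add x y hx hy => rw [map_add, map_add, map_add, map_add, smul_add, ← hx, ← hy]; abel
  | single A r =>
    rw [← mul_one r, ← smul_eq_mul, ← Finsupp.smul_single, map_smul, map_smul, map_smul,
      map_smul, ← smul_add, taylorD_taylorHomotopy_add_single, smul_comm]

end TaylorHomotopy

noncomputable section PivotRetraction

variable (k : Type*) [Field k] {n q : ℕ} (D : Fin q → (Fin n →₀ ℕ)) (S : Finset (Fin q))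
  (p : Fin q)

def pivotContraction : TotMod k n q →ₗ[MvPolynomial (Fin n) k] TotMod k n q :=
  Finsupp.linearCombination _ fun B =>
    if S ⊆ B ∧ p ∉ B then Finsupp.single (insert p B) (fsign {p} B : MvPolynomial (Fin n) k)
    else 0

def pivotRetraction : TotMod k n q →ₗ[MvPolynomial (Fin n) k] TotMod k n q :=
  LinearMap.id - (taylorD k n q D ∘ₗ pivotContraction k S p +
    pivotContraction k S p ∘ₗ taylorD k n q D)

variable {k D S p}

theorem pivotContraction_single (B : Finset (Fin q)) (r : MvPolynomial (Fin n) k) :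
    pivotContraction k S p (Finsupp.single B r) =
      if S ⊆ B ∧ p ∉ B then Finsupp.single (insert p B) (r * fsign {p} B) else 0 := by
  rw [pivotContraction, Finsupp.linearCombination_single]
  split_ifs <;> simp [Finsupp.smul_single]

theorem pivotRetraction_apply (x : TotMod k n q) :
    pivotRetraction k D S p x = x - (taylorD k n q D (pivotContraction k S p x) +
      pivotContraction k S p (taylorD k n q D x)) :=
  rfl

theorem taylorD_pivotRetraction (x : TotMod k n q) :
    taylorD k n q D (pivotRetraction k D S p x) = pivotRetraction k D S p (taylorD k n q D x) := by
  simp only [pivotRetraction_apply, map_sub, map_add, taylorD_taylorD, map_zero]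
  abel

theorem pivotRetraction_single (B : Finset (Fin q)) (r : MvPolynomial (Fin n) k) :
    pivotRetraction k D S p (Finsupp.single B r) =
      r • pivotRetraction k D S p (Finsupp.single B 1) := by
  rw [← map_smul, Finsupp.smul_single, smul_eq_mul, mul_one]

theorem pivotRetraction_single_of_not_subset {B : Finset (Fin q)} (hB : ¬ S ⊆ B) :
    pivotRetraction k D S p (Finsupp.single B 1) = Finsupp.single B 1 := by
  rw [pivotRetraction_apply, pivotContraction_single, if_neg (fun h => hB h.1), map_zero,
    zero_add, taylorD_single_s12, one_smul, faceSum, map_sum,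
    Finset.sum_eq_zero fun j _ => ?_, sub_zero]
  rw [pivotContraction_single, if_neg fun h => hB (h.1.trans Finset.sdiff_subset)]

theorem pivotRetraction_of_mem_subcx {x : TotMod k n q} (hx : x ∈ subcx k n q (pivotΩ S)) :
    pivotRetraction k D S p x = x := by
  rw [subcx, Finsupp.supported_eq_span_single] at hx
  refine LinearMap.eqOn_span' (g := LinearMap.id) ?_ hx
  rintro _ ⟨B, hB, rfl⟩
  exact pivotRetraction_single_of_not_subset hB

theorem sup_insert_eq_of_le_sup {B : Finset (Fin q)} (hgap : D p ≤ S.sup D) (hS : S ⊆ B) :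
    (insert p B).sup D = B.sup D := by
  rw [Finset.sup_insert]
  exact sup_eq_right.2 (hgap.trans (Finset.sup_mono hS))

theorem pivotRetraction_single_of_mem (hpS : p ∉ S) (hgap : D p ≤ S.sup D)
    {B : Finset (Fin q)} (hS : S ⊆ B) (hp : p ∈ B) :
    pivotRetraction k D S p (Finsupp.single B 1) = 0 := by
  have hB : insert p (B \ {p}) = B := by grind
  have hSB : S ⊆ B \ {p} := fun x hx => by grind
  have hsup : B.sup D = (B \ {p}).sup D := by rw [← sup_insert_eq_of_le_sup hgap hSB, hB]
  have hface : faceCoeff k D B p = fsign {p} (B \ {p}) := by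
    rw [faceCoeff, hsup, tsub_self, monomial_zero', C_1, mul_one]
  rw [pivotRetraction_apply, pivotContraction_single, if_neg (fun h => h.2 hp), map_zero,
    zero_add, taylorD_single_s12, one_smul, faceSum, map_sum, Finset.sum_eq_single p, sub_eq_zero,
    pivotContraction_single, if_pos ⟨hSB, by simp⟩, hB, hface]
  · rw [← Int.cast_mul, fsign_mul_self_s12 (by simp), Int.cast_one]
  · intro i hi hip
    rw [pivotContraction_single, if_neg]
    rintro ⟨hSi, hpi⟩
    exact hpi (by simp [hp, Ne.symm hip])
  · exact fun h => absurd hp h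

theorem fsign_mul_faceCoeff_insert_add (hgap : D p ≤ S.sup D) {B : Finset (Fin q)} {i : Fin q}
    (hi : i ∈ B) (hp : p ∉ B) (hS : S ⊆ B \ {i}) :
    (fsign {p} B : MvPolynomial (Fin n) k) * faceCoeff k D (insert p B) i +
      faceCoeff k D B i * fsign {p} (B \ {i}) = 0 := by
  set T := B \ {i}
  have hip : i ≠ p := by rintro rfl; exact hp hi
  have hiT : i ∉ T := by simp [T]
  have hpT : p ∉ T := by simp [T, hp]
  have hB : B = insert i T := by grind
  have hpB : insert p B \ {i} = insert p T := by grind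
  have hsup : (insert p B).sup D - (insert p T).sup D = B.sup D - T.sup D := by
    rw [sup_insert_eq_of_le_sup hgap (hS.trans Finset.sdiff_subset),
      sup_insert_eq_of_le_sup hgap hS]
  have hsign := congrArg (Int.cast : ℤ → MvPolynomial (Fin n) k)
    (fsign_insert_mul_fsign_insert hip hiT hpT)
  push_cast at hsign
  rw [← hB] at hsign
  rw [faceCoeff, faceCoeff, hpB, hsup]
  linear_combination monomial (B.sup D - T.sup D) (1 : k) * hsign

theorem pivotRetraction_single_of_notMem (hgap : D p ≤ S.sup D) {B : Finset (Fin q)}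
    (hS : S ⊆ B) (hp : p ∉ B) :
    pivotRetraction k D S p (Finsupp.single B 1) =
      -((fsign {p} B : MvPolynomial (Fin n) k) • faceSum k D (insert p B) S) := by
  have hface : faceCoeff k D (insert p B) p = fsign {p} B := by
    rw [faceCoeff, show insert p B \ {p} = B by grind, sup_insert_eq_of_le_sup hgap hS,
      tsub_self, monomial_zero', C_1, mul_one]
  have hfaces : faceSum k D (insert p B) (insert p B) =
      Finsupp.single B (fsign {p} B : MvPolynomial (Fin n) k) +
      (faceSum k D (insert p B) S + faceSum k D (insert p B) (B \ S)) := by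
    rw [faceSum, Finset.sum_insert hp, ← Finset.sum_sdiff hS, hface,
      add_comm (∑ _ ∈ B \ S, _), show insert p B \ {p} = B by grind]
    rfl
  have hcancel : (fsign {p} B : MvPolynomial (Fin n) k) • faceSum k D (insert p B) (B \ S) +
      pivotContraction k S p (taylorD k n q D (Finsupp.single B 1)) = 0 := by
    simp only [taylorD_single_s12, one_smul, faceSum, map_sum]
    rw [← Finset.sum_sdiff hS, Finset.sum_eq_zero (s := S) fun i hi => ?_, add_zero,
      Finset.smul_sum, ← Finset.sum_add_distrib]
    · refine Finset.sum_eq_zero fun i hi => ?_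
      obtain ⟨hiB, hiS⟩ := Finset.mem_sdiff.1 hi
      have hSi : S ⊆ B \ {i} := fun x hx => by grind
      rw [pivotContraction_single, if_pos ⟨hSi, by simp [hp]⟩, Finsupp.smul_single, smul_eq_mul,
        show insert p B \ {i} = insert p (B \ {i}) by grind, ← Finsupp.single_add,
        fsign_mul_faceCoeff_insert_add hgap hiB hp hSi, Finsupp.single_zero]
    · rw [pivotContraction_single, if_neg (fun h => by simpa using h.1 hi)]
  rw [pivotRetraction_apply, pivotContraction_single, if_pos ⟨hS, hp⟩, one_mul, taylorD_single_s12,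
    hfaces, smul_add, smul_add, Finsupp.smul_single, smul_eq_mul, ← Int.cast_mul,
    fsign_mul_self_s12 hp, Int.cast_one, add_assoc, add_assoc, hcancel]
  abel

end PivotRetraction

section PivotIndex

variable {q l : ℕ}

theorem mem_Lset {x : Fin q} : x ∈ Lset q l ↔ (x : ℕ) < l := by
  simp [Lset]

theorem card_Lset (hq : l < q) : (Lset q l).card = l := by
  rw [Lset, Fin.card_filter_val_lt, min_eq_right hq.le]

theorem lt_pivElt_iff (hq : l < q) {x : Fin q} : x < pivElt q l hq ↔ x ∈ Lset q l := by
  rw [mem_Lset, Fin.lt_def]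
  rfl

theorem pivElt_notMem_Lset (hq : l < q) : pivElt q l hq ∉ Lset q l := by
  simp [mem_Lset, pivElt]

theorem fsign_pivElt (hq : l < q) {B : Finset (Fin q)} (hL : Lset q l ⊆ B)
    (hp : pivElt q l hq ∉ B) : fsign {pivElt q l hq} B = (-1) ^ l := by
  have hbelow : B.filter (· < pivElt q l hq) = Lset q l := by
    ext x
    simp only [Finset.mem_filter, lt_pivElt_iff]
    exact ⟨And.right, fun hx => ⟨hL hx, hx⟩⟩
  rw [fsign_singleton_of_notMem hp, hbelow, card_Lset hq]

theorem card_inter_Lset_of_subset_insert (hq : l < q) {A : Finset (Fin q)} {j : Fin q}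
    (hA : ¬ Lset q l ⊆ A) (hj : Lset q l ⊆ insert j A) :
    (A ∩ Lset q l).card = l - 1 := by
  have hsdiff : Lset q l \ A = {j} := by
    obtain ⟨x, hxL, hxA⟩ := Finset.not_subset.1 hA
    have hxj : x = j := by simpa [hxA] using hj hxL
    ext y
    simp only [Finset.mem_sdiff, Finset.mem_singleton]
    refine ⟨fun ⟨hyL, hyA⟩ => by simpa [hyA] using hj hyL, ?_⟩
    rintro rfl
    exact hxj ▸ ⟨hxL, hxA⟩
  have := Finset.card_inter_add_card_sdiff (Lset q l) A
  rw [hsdiff, Finset.card_singleton, card_Lset hq, Finset.inter_comm] at this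
  omega

theorem Lset_sdiff_eq_singleton_tOf (hq : l < q) {A : Finset (Fin q)} (hA : ¬ Lset q l ⊆ A)
    (hc : (A ∩ Lset q l).card = l - 1) : Lset q l \ A = {tOf q l hq A} := by
  have hne : (Lset q l \ A).Nonempty := Finset.sdiff_nonempty.2 hA
  have hcard : (Lset q l \ A).card = 1 := by
    have hsum := Finset.card_inter_add_card_sdiff (Lset q l) A
    rw [card_Lset hq, Finset.inter_comm, hc] at hsum
    have := hne.card_pos
    omega
  obtain ⟨t, ht⟩ := Finset.card_eq_one.1 hcard
  rw [ht, tOf, dif_pos (ht ▸ hne)]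
  simp [ht]

end PivotIndex

noncomputable section PivotHomotopy

variable {k : Type*} [Field k] {n q l : ℕ} {D : Fin q → (Fin n →₀ ℕ)}
  {c : Fin q → MvPolynomial (Fin n) k}

theorem sigTerm_mem_subcx {S A J : Finset (Fin q)} (hJ : ∀ j ∈ J, ¬ S ⊆ insert j A) :
    sigTerm k n q D c A J ∈ subcx k n q (pivotΩ S) :=
  Submodule.sum_mem _ fun j hj => Finsupp.single_mem_supported _ _ (hJ j hj)

theorem sigTerm_compl_eq_add {A : Finset (Fin q)} {t : Fin q} (ht : t ∉ A) :
    sigTerm k n q D c A Aᶜ =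
      Finsupp.single (insert t A) (extCoeff D c A t) + sigTerm k n q D c A (insert t A)ᶜ := by
  rw [sigTerm_eq_sum_extCoeff, sigTerm_eq_sum_extCoeff, Finset.compl_insert]
  exact (Finset.add_sum_erase _ _ (Finset.mem_compl.2 ht)).symm

variable (hq : l < q)

theorem sigCorr_eq_smul_faceSum (hgap : D (pivElt q l hq) ≤ (Lset q l).sup D)
    {A : Finset (Fin q)} {t : Fin q} (hL : Lset q l ⊆ insert t A)
    (hp : pivElt q l hq ∉ insert t A) :
    sigCorr k n q l hq D c A t = extCoeff D c A t •
      -((fsign {pivElt q l hq} (insert t A) : MvPolynomial (Fin n) k) •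
        faceSum k D (insert (pivElt q l hq) (insert t A)) (Lset q l)) := by
  set p := pivElt q l hq
  set B := insert t A
  rw [sigCorr, faceSum, smul_neg, Finset.smul_sum, Finset.smul_sum, ← Finset.sum_neg_distrib]
  refine Finset.sum_congr rfl fun i hi => ?_
  have hip : i < p := (lt_pivElt_iff hq).2 hi
  have hpB : insert p B \ {i} = insert p (B \ {i}) := by grind
  have hsign : fsign {i} (insert p B \ {i}) = fsign {i} (B \ {i}) := by
    rw [hpB, fsign_insert_of_gt (by simp) hip]
  have hsup : (insert p B).sup D = B.sup D := sup_insert_eq_of_le_sup hgap hL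
  have hmon : monomial (D t + A.sup D - B.sup D) (1 : k) *
      monomial ((insert p B).sup D - (insert p B \ {i}).sup D) 1 =
        monomial (D t + A.sup D - (insert p B \ {i}).sup D) 1 := by
    rw [monomial_mul, mul_one, hsup, tsub_add_tsub_cancel (sup_insert_le_add t A)
      (hsup ▸ Finset.sup_mono Finset.sdiff_subset)]
  simp only [Finsupp.smul_single, smul_eq_mul, ← Finsupp.single_neg]
  congr 1
  rw [extCoeff, faceCoeff, hsign, fsign_pivElt hq hL hp]
  push_cast
  linear_combination (-1 : MvPolynomial (Fin n) k) ^ l * fsign {t} A * c t *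
    fsign {i} (B \ {i}) * hmon

theorem sigmaMap_single_eq_pivotRetraction (hgap : D (pivElt q l hq) ≤ (Lset q l).sup D)
    {A : Finset (Fin q)} (hA : ¬ Lset q l ⊆ A) :
    sigmaMap k n q l hq D c (Finsupp.single A 1) =
      pivotRetraction k D (Lset q l) (pivElt q l hq) (taylorHomotopy D c (Finsupp.single A 1)) := by
  rw [sigmaMap, Finsupp.linearCombination_single, one_smul, taylorHomotopy_single, one_smul]
  by_cases hc : (A ∩ Lset q l).card ≠ l - 1
  · rw [if_pos hc, pivotRetraction_of_mem_subcx (sigTerm_mem_subcx fun j _ hj =>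
      hc (card_inter_Lset_of_subset_insert hq hA hj))]
  rw [if_neg hc]
  rw [not_not] at hc
  have ht := Lset_sdiff_eq_singleton_tOf hq hA hc
  set t := tOf q l hq A
  have htL : t ∈ Lset q l := (Finset.mem_sdiff.1 (ht ▸ Finset.mem_singleton_self t)).1
  have htA : t ∉ A := (Finset.mem_sdiff.1 (ht ▸ Finset.mem_singleton_self t)).2
  have hL : Lset q l ⊆ insert t A := fun x hx => by
    by_cases hxA : x ∈ A
    · exact Finset.mem_insert_of_mem hxA
    · simp [show x = t by simpa [ht] using Finset.mem_sdiff.2 ⟨hx, hxA⟩]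
  have hrest : pivotRetraction k D (Lset q l) (pivElt q l hq)
      (sigTerm k n q D c A (insert t A)ᶜ) = sigTerm k n q D c A (insert t A)ᶜ := by
    refine pivotRetraction_of_mem_subcx (sigTerm_mem_subcx fun j hj hLj => ?_)
    have hjt : j ≠ t := fun h => by simp [h] at hj
    have htj : t = j := by simpa [htA] using hLj htL
    exact hjt htj.symm
  rw [sigTerm_compl_eq_add htA, map_add, hrest, pivotRetraction_single]
  split_ifs with hp
  · rw [pivotRetraction_single_of_mem (pivElt_notMem_Lset hq) hgap hL
      (Finset.mem_insert_of_mem hp), smul_zero, zero_add]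
  · have hpt : pivElt q l hq ≠ t := fun h => pivElt_notMem_Lset hq (h ▸ htL)
    have hpB : pivElt q l hq ∉ insert t A := by simp [hp, hpt]
    rw [pivotRetraction_single_of_notMem hgap hL hpB, sigCorr_eq_smul_faceSum hq hgap hL hpB,
      add_comm]

theorem sigmaMap_eq_pivotRetraction_taylorHomotopy
    (hgap : D (pivElt q l hq) ≤ (Lset q l).sup D) {x : TotMod k n q}
    (hx : x ∈ subcx k n q (pivotΩ (Lset q l))) :
    sigmaMap k n q l hq D c x =
      pivotRetraction k D (Lset q l) (pivElt q l hq) (taylorHomotopy D c x) := by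
  rw [subcx, Finsupp.supported_eq_span_single] at hx
  refine LinearMap.eqOn_span' (g := pivotRetraction k D (Lset q l) (pivElt q l hq) ∘ₗ
    taylorHomotopy D c) ?_ hx
  rintro _ ⟨A, hA, rfl⟩
  exact sigmaMap_single_eq_pivotRetraction hq hgap hA

end PivotHomotopy

theorem lcmMono_dvd_lcmMono_iff {k : Type*} [Field k] {n q : ℕ} {D : Fin q → (Fin n →₀ ℕ)}
    {σ τ : Finset (Fin q)} : lcmMono k n q D σ ∣ lcmMono k n q D τ ↔ σ.sup D ≤ τ.sup D := by
  simp [lcmMono, monomial_dvd_monomial]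

theorem homotopy_eq_smul_general {k : Type*} [Field k] {n q l : ℕ}
    (hq : l < q)
    (D : Fin q → (Fin n →₀ ℕ))
    (hgap : lcmMono k n q D {pivElt q l hq} ∣ lcmMono k n q D (Lset q l))
    (r : ℕ) (a : Fin r → Fin q → MvPolynomial (Fin n) k)
    (s : Fin r) :
    ∀ x ∈ subcx k n q (pivotΩ (Lset q l)),
      taylorD k n q D (sigmaMap k n q l hq D (a s) x) +
        sigmaMap k n q l hq D (a s) (taylorD k n q D x) =
      aElt k n q D (a s) • x := by
  intro x hx
  rw [lcmMono_dvd_lcmMono_iff, Finset.sup_singleton] at hgap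
  rw [sigmaMap_eq_pivotRetraction_taylorHomotopy hq hgap hx,
    sigmaMap_eq_pivotRetraction_taylorHomotopy hq hgap (taylorD_mem_subcx hx),
    taylorD_pivotRetraction, ← map_add, taylorD_taylorHomotopy_add, map_smul,
    pivotRetraction_of_mem_subcx hx]

/-- **The homotopy identity.**
For each `s ∈ [r]`, the map `∂σ_{e_s} + σ_{e_s}∂` equals multiplication by `a_s`
on the pivot resolution `T_{1,…,l}`. -/
theorem homotopy_eq_smul {k : Type*} [Field k] {n q l : ℕ}
    (hl : 2 ≤ l) (hq : l < q)
    (D : Fin q → (Fin n →₀ ℕ))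
    (hne : ∀ i : Fin q, D i ≠ 0)
    (hmin : ∀ i j : Fin q, i ≠ j → ¬ lcmMono k n q D {i} ∣ lcmMono k n q D {j})
    (hgap : lcmMono k n q D {pivElt q l hq} ∣ lcmMono k n q D (Lset q l))
    (r : ℕ) (a : Fin r → Fin q → MvPolynomial (Fin n) k)
    (s : Fin r) :
    ∀ x ∈ subcx k n q (pivotΩ (Lset q l)),
      taylorD k n q D (sigmaMap k n q l hq D (a s) x) +
        sigmaMap k n q l hq D (a s) (taylorD k n q D x) =
      aElt k n q D (a s) • x :=
  homotopy_eq_smul_general hq D hgap r a s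
end
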